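/- arXiv:2512.23013 — 3 statements merged into one kernel-verified Lean document; each statement's English description precedes it below -/
import Mathlib

section
/- If d is even and n = 1, then Tr(Q Π_{sym⁴}) = (d + 2)²/8. -/
open scoped BigOperators
open Matrix

noncomputable section

namespace MagicGap

/-- `ω = exp(2πi/d)`. -/
def omega (d : ℕ) : ℂ := Complex.exp (2 * Real.pi * Complex.I / d)

/-- `τ = −exp(iπ/d)`. -/
def tau (d : ℕ) : ℂ := -Complex.exp (Real.pi * Complex.I / d)

/-- Single-qudit displacement operator `D_(a₁,a₂) = τ^{a₁a₂} X^{a₁} Z^{a₂}`,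
as a `d × d` matrix: its `(j,k)` entry is `τ^{a₁a₂} ω^{a₂ k} δ_{j, k+a₁ mod d}`. -/
def D1 (d : ℕ) (a : ℤ × ℤ) : Matrix (Fin d) (Fin d) ℂ := fun j k =>
  tau d ^ (a.1 * a.2) * omega d ^ (a.2 * ((k : ℕ) : ℤ)) *
    (if ((j : ℕ) : ZMod d) = ((k : ℕ) : ZMod d) + (a.1 : ZMod d) then 1 else 0)

/-- Multi-qudit displacement operator on `(ℂ^d)^{⊗n}`, the tensor product of
single-qudit displacement operators. -/
def D (d n : ℕ) (a : Fin n → ℤ × ℤ) :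
    Matrix (Fin n → Fin d) (Fin n → Fin d) ℂ := fun j k =>
  ∏ i, D1 d (a i) (j i) (k i)

/-- The symplectic form `[a,b] = Σᵢ (a_{2i} b_{2i−1} − a_{2i−1} b_{2i})`. -/
def symp {n : ℕ} (a b : Fin n → ℤ × ℤ) : ℤ :=
  ∑ i, ((a i).2 * (b i).1 - (a i).1 * (b i).2)

/-- Standard representatives `{0,…,d−1}^{2n} ⊂ ℤ^{2n}` of `ℤ_d^{2n}`. -/
abbrev Reps (d n : ℕ) := Fin n → Fin d × Fin d

/-- View a representative as an integer vector. -/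
def toZ {d n : ℕ} (a : Reps d n) : Fin n → ℤ × ℤ :=
  fun i => ((((a i).1 : ℕ) : ℤ), (((a i).2 : ℕ) : ℤ))

/-- The group `ℤ_d^{2n}`. -/
abbrev PS (d n : ℕ) := Fin n → ZMod d × ZMod d

/-- Standard representative in `{0,…,d−1}^{2n} ⊂ ℤ^{2n}` of an element of `ℤ_d^{2n}`. -/
def repz {d n : ℕ} (a : PS d n) : Fin n → ℤ × ℤ :=
  fun i => (((a i).1.val : ℤ), ((a i).2.val : ℤ))

/-- Fourfold tensor product `A ⊗ B ⊗ C ⊗ E` of operators on `H^{⊗4}`. -/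
def tens4 {I : Type*} (A B C E : Matrix I I ℂ) :
    Matrix (Fin 4 → I) (Fin 4 → I) ℂ := fun j k =>
  A (j 0) (k 0) * B (j 1) (k 1) * C (j 2) (k 2) * E (j 3) (k 3)

/-- `A^{⊗4}`. -/
def pow4 {I : Type*} (A : Matrix I I ℂ) : Matrix (Fin 4 → I) (Fin 4 → I) ℂ :=
  tens4 A A A A

/-- `Q = d^{−2n} Σ_{a∈ℤ_d^{2n}} D_a ⊗ D_a† ⊗ D_a ⊗ D_a†`. -/
def Q (d n : ℕ) : Matrix (Fin 4 → (Fin n → Fin d)) (Fin 4 → (Fin n → Fin d)) ℂ :=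
  ((d : ℂ) ^ (2 * n))⁻¹ •
    ∑ a : Reps d n,
      tens4 (D d n (toZ a)) (D d n (toZ a))ᴴ (D d n (toZ a)) (D d n (toZ a))ᴴ

/-- The unitary `T_π` permuting the four tensor factors of `H^{⊗4}`. -/
def permOp (I : Type*) [DecidableEq I] (π : Equiv.Perm (Fin 4)) :
    Matrix (Fin 4 → I) (Fin 4 → I) ℂ := fun j k =>
  if ∀ m, j m = k (π m) then 1 else 0

/-- `Π_{sym⁴} = (1/24) Σ_{π∈S₄} T_π`, the projector onto the symmetric subspace
of `H^{⊗4}`. -/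
def piSym4 (I : Type*) [DecidableEq I] : Matrix (Fin 4 → I) (Fin 4 → I) ℂ :=
  (24 : ℂ)⁻¹ • ∑ π : Equiv.Perm (Fin 4), permOp I π

/-- A totally isotropic subgroup of `ℤ_d^{2n}`: all pairwise symplectic products
vanish mod `d`. -/
def IsIsotropic (d n : ℕ) (S : AddSubgroup (PS d n)) : Prop :=
  ∀ a ∈ S, ∀ b ∈ S, ((symp (repz a) (repz b) : ℤ) : ZMod d) = 0

open Classical in
/-- Stabilizer projector with trivial homomorphism: `Π_𝒮 = |𝒮|⁻¹ Σ_{a∈𝒮} D_a`. -/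
def stabProj (d n : ℕ) [NeZero d] (S : AddSubgroup (PS d n)) :
    Matrix (Fin n → Fin d) (Fin n → Fin d) ℂ :=
  (Nat.card S : ℂ)⁻¹ • ∑ a : PS d n, if a ∈ S then D d n (repz a) else 0

/-- `𝒮^⊥ = {a : [a,b] ≡ 0 (mod d) for all b ∈ 𝒮}`. -/
def perp (d n : ℕ) (S : AddSubgroup (PS d n)) : Set (PS d n) :=
  {a | ∀ b ∈ S, ((symp (repz a) (repz b) : ℤ) : ZMod d) = 0}

/-- `A_𝒮 = {a ∈ ℤ_d^{2n} : 2a mod d ∈ 𝒮 and a ∈ 𝒮^⊥}`. -/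
def ASet (d n : ℕ) (S : AddSubgroup (PS d n)) : Set (PS d n) :=
  {a | 2 • a ∈ S ∧ a ∈ perp d n S}

/-- The average extrinsic stabilizer-entropy of the code space of `𝒮`:
`1 − d_B · C(d_S+3,4)⁻¹ · Tr(Q Π_𝒮^{⊗4} Π_{sym⁴})`. -/
def gapBigTerm (d n : ℕ) [NeZero d] (S : AddSubgroup (PS d n)) (dS : ℕ) : ℂ :=
  1 - (d : ℂ) ^ n * ((Nat.choose (dS + 3) 4 : ℕ) : ℂ)⁻¹ *
    trace (Q d n * pow4 (stabProj d n S) * piSym4 (Fin n → Fin d))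

/-- The average intrinsic stabilizer entropy of a single qudit `ℂ^{d_S}`:
`1 − d_S · C(d_S+3,4)⁻¹ · Tr(Q_S Π^S_{sym⁴})`. -/
def smallTermQudit (dS : ℕ) : ℂ :=
  1 - (dS : ℂ) * ((Nat.choose (dS + 3) 4 : ℕ) : ℂ)⁻¹ *
    trace (Q dS 1 * piSym4 (Fin 1 → Fin dS))

/-- The average intrinsic stabilizer entropy of `m` qubits `(ℂ²)^{⊗m}`:
`1 − 2^m · C(2^m+3,4)⁻¹ · Tr(Q_S Π^S_{sym⁴})`. -/
def smallTermQubits (m : ℕ) : ℂ :=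
  1 - (2 : ℂ) ^ m * ((Nat.choose (2 ^ m + 3) 4 : ℕ) : ℂ)⁻¹ *
    trace (Q 2 m * piSym4 (Fin m → Fin 2))


section Aux

variable {d : ℕ}

lemma omega_ne_zero (d : ℕ) : omega d ≠ 0 := Complex.exp_ne_zero _
lemma tau_ne_zero (d : ℕ) : tau d ≠ 0 := neg_ne_zero.mpr (Complex.exp_ne_zero _)

lemma isPrimRoot (hd : d ≠ 0) : IsPrimitiveRoot (omega d) d :=
  Complex.isPrimitiveRoot_exp d hd

lemma conj_exp_real_I (r : ℂ) (hr : (starRingEnd ℂ) r = -r) :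
    (starRingEnd ℂ) (Complex.exp r) = (Complex.exp r)⁻¹ := by
  rw [← Complex.exp_conj, hr, Complex.exp_neg]

lemma conj_arg (x : ℝ) : (starRingEnd ℂ) ((x : ℂ) * Complex.I / d) = -((x:ℂ) * Complex.I / d) := by
  simp [Complex.ext_iff, Complex.div_re, Complex.div_im]
  ring

lemma conj_tau_mul_self : (starRingEnd ℂ) (tau d) * tau d = 1 := by
  have h := conj_exp_real_I ((Real.pi : ℂ) * Complex.I / d) (conj_arg Real.pi)
  simp only [tau, map_neg, neg_mul_neg, h]
  exact inv_mul_cancel₀ (Complex.exp_ne_zero _)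

lemma conj_tau_zpow_mul (e : ℤ) : (starRingEnd ℂ) (tau d ^ e) * tau d ^ e = 1 := by
  rw [map_zpow₀, ← mul_zpow, conj_tau_mul_self, _root_.one_zpow]

lemma conj_omega : (starRingEnd ℂ) (omega d) = (omega d)⁻¹ := by
  have := conj_arg (d := d) (2 * Real.pi)
  have h2 : (starRingEnd ℂ) (2 * (Real.pi:ℂ) * Complex.I / d) = -(2 * (Real.pi:ℂ) * Complex.I / d) := by
    push_cast at this ⊢
    rw [mul_assoc, mul_div_assoc] at this ⊢
    exact this
  exact conj_exp_real_I _ h2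

lemma conj_omega_zpow (e : ℤ) : (starRingEnd ℂ) (omega d ^ e) = omega d ^ (-e) := by
  rw [map_zpow₀, conj_omega, ← _root_.zpow_neg_one, ← _root_.zpow_mul, neg_one_mul]

lemma omega_pow_d (hd : d ≠ 0) : omega d ^ (d : ℤ) = 1 := by
  have := (isPrimRoot hd).pow_eq_one
  exact_mod_cast this

lemma omega_zpow_eq_one_iff (hd : d ≠ 0) (s : ℤ) :
    omega d ^ s = 1 ↔ ((s : ZMod d) = 0) := by
  rw [(isPrimRoot hd).zpow_eq_one_iff_dvd, ZMod.intCast_zmod_eq_zero_iff_dvd]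

lemma sum_omega_geom (hd : d ≠ 0) (s : ℤ) :
    ∑ t : Fin d, omega d ^ (((t : ℕ) : ℤ) * s) = if ((s : ZMod d) = 0) then (d : ℂ) else 0 := by
  have hrw : ∀ t : Fin d, omega d ^ (((t : ℕ) : ℤ) * s) = (omega d ^ s) ^ (t : ℕ) := by
    intro t
    rw [mul_comm, _root_.zpow_mul, _root_.zpow_natCast]
  simp only [hrw]
  rw [Fin.sum_univ_eq_sum_range (fun t => (omega d ^ s) ^ t)]
  by_cases h : (s : ZMod d) = 0
  · rw [if_pos h]
    have h1 : omega d ^ s = 1 := (omega_zpow_eq_one_iff hd s).mpr h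
    simp [h1]
  · rw [if_neg h]
    have h1 : omega d ^ s ≠ 1 := fun hc => h ((omega_zpow_eq_one_iff hd s).mp hc)
    rw [geom_sum_eq h1]
    have : (omega d ^ s) ^ d = 1 := by
      rw [← _root_.zpow_natCast, ← _root_.zpow_mul, mul_comm, _root_.zpow_mul, omega_pow_d hd,
        _root_.one_zpow]
    rw [this, sub_self, zero_div]

/-- cast the single qudit index to `ZMod d` -/
def zc {d : ℕ} (x : Fin 1 → Fin d) : ZMod d := ((x 0 : ℕ) : ZMod d)

lemma sum_fin_cast [NeZero d] (f : ZMod d → ℂ) :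
    ∑ t : Fin d, f ((t : ℕ) : ZMod d) = ∑ u : ZMod d, f u := by
  apply Fintype.sum_bijective (fun t : Fin d => ((t : ℕ) : ZMod d))
  · rw [Fintype.bijective_iff_injective_and_card]
    refine ⟨fun s t hst => ?_, by simp [ZMod.card]⟩
    apply Fin.ext
    have := congrArg ZMod.val hst
    rwa [ZMod.val_natCast_of_lt s.isLt, ZMod.val_natCast_of_lt t.isLt] at this
  · intro t; rfl

lemma ind_and (p q : Prop) [Decidable p] [Decidable q] :
    (if p ∧ q then (1:ℂ) else 0) = (if p then 1 else 0) * (if q then 1 else 0) := by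
  by_cases hp : p <;> by_cases hq : q <;> simp [hp, hq]

lemma Q_apply (hd : d ≠ 0) (j k : Fin 4 → (Fin 1 → Fin d)) :
    Q d 1 j k = (d : ℂ)⁻¹ *
      (if ((zc (j 0) - zc (k 0) = zc (k 1) - zc (j 1) ∧
            zc (j 0) - zc (k 0) = zc (j 2) - zc (k 2) ∧
            zc (j 0) - zc (k 0) = zc (k 3) - zc (j 3)) ∧
            zc (k 0) + zc (k 2) = zc (j 1) + zc (j 3)) then 1 else 0) := by
  classical
  have hω := omega_ne_zero d
  set s : ℤ := ((k 0 0 : ℕ) : ℤ) - ((j 1 0 : ℕ) : ℤ) + ((k 2 0 : ℕ) : ℤ) - ((j 3 0 : ℕ) : ℤ)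
    with hs
  set F : Fin d × Fin d → ℂ := fun p =>
      (D1 d (((p.1 : ℕ) : ℤ), ((p.2 : ℕ) : ℤ)) (j 0 0) (k 0 0) *
       (starRingEnd ℂ) (D1 d (((p.1 : ℕ) : ℤ), ((p.2 : ℕ) : ℤ)) (k 1 0) (j 1 0)) *
       D1 d (((p.1 : ℕ) : ℤ), ((p.2 : ℕ) : ℤ)) (j 2 0) (k 2 0) *
       (starRingEnd ℂ) (D1 d (((p.1 : ℕ) : ℤ), ((p.2 : ℕ) : ℤ)) (k 3 0) (j 3 0))) with hF
  have h1 : Q d 1 j k = ((d : ℂ) ^ 2)⁻¹ * ∑ p : Fin d × Fin d, F p := by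
    rw [Q, Matrix.smul_apply, Matrix.sum_apply]
    rw [show ((d:ℂ) ^ (2*1)) = (d:ℂ)^2 by norm_num]
    rw [smul_eq_mul]
    congr 1
    rw [← Fintype.sum_equiv (Equiv.funUnique (Fin 1) (Fin d × Fin d))
      (fun a : Reps d 1 => F (a 0)) F (fun a => rfl)]
    refine Finset.sum_congr rfl fun a _ => ?_
    simp only [tens4, D, Matrix.conjTranspose_apply, Fin.prod_univ_one, toZ, hF]
    rfl
  haveI : NeZero d := ⟨hd⟩
  have hdc : (d : ℂ) ≠ 0 := Nat.cast_ne_zero.mpr hd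
  set c0 : ZMod d := zc (j 0) - zc (k 0) with hc0
  set c1 : ZMod d := zc (k 1) - zc (j 1) with hc1
  set c2 : ZMod d := zc (j 2) - zc (k 2) with hc2
  set c3 : ZMod d := zc (k 3) - zc (j 3) with hc3
  have heq : ∀ (u v α : ZMod d), (u = v + α) ↔ (α = u - v) := fun u v α =>
    ⟨fun h => by rw [h]; ring, fun h => by rw [h]; ring⟩
  have key : ∀ (cT T w0 w1 w2 w3 i0 i1 i2 i3 r : ℂ), cT * T = 1 → w0*w1*w2*w3 = r →
      (T * w0 * i0) * (cT * w1 * i1) * (T * w2 * i2) * (cT * w3 * i3) = (i0*i1*i2*i3) * r := by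
    intro cT T w0 w1 w2 w3 i0 i1 i2 i3 r h1 h2
    calc (T * w0 * i0) * (cT * w1 * i1) * (T * w2 * i2) * (cT * w3 * i3)
        = (cT * T) * (cT * T) * (w0*w1*w2*w3) * (i0*i1*i2*i3) := by ring
      _ = (i0*i1*i2*i3) * r := by rw [h1, h2]; ring
  have h2 : ∀ p : Fin d × Fin d, F p =
      (if (((((p.1:ℕ):ZMod d) = c0 ∧ ((p.1:ℕ):ZMod d) = c1) ∧ ((p.1:ℕ):ZMod d) = c2) ∧
          ((p.1:ℕ):ZMod d) = c3) then (1:ℂ) else 0) * omega d ^ (((p.2:ℕ):ℤ) * s) := by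
    intro p
    rw [hF]
    have hw4 : ∀ e1 e2 e3 e4 f : ℤ, e1 + e2 + e3 + e4 = f →
        omega d ^ e1 * omega d ^ e2 * omega d ^ e3 * omega d ^ e4 = omega d ^ f := by
      intro e1 e2 e3 e4 f h
      rw [← zpow_add₀ hω, ← zpow_add₀ hω, ← zpow_add₀ hω, h]
    simp only [D1, _root_.map_mul, conj_omega_zpow, apply_ite (starRingEnd ℂ),
      _root_.map_one, _root_.map_zero, Int.cast_natCast]
    rw [key ((starRingEnd ℂ) (tau d ^ (((p.1:ℕ):ℤ) * ((p.2:ℕ):ℤ)))) (tau d ^ (((p.1:ℕ):ℤ) * ((p.2:ℕ):ℤ)))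
      (omega d ^ (((p.2:ℕ):ℤ) * ((k 0 0 : ℕ):ℤ))) (omega d ^ (-(((p.2:ℕ):ℤ) * ((j 1 0 : ℕ):ℤ))))
      (omega d ^ (((p.2:ℕ):ℤ) * ((k 2 0 : ℕ):ℤ))) (omega d ^ (-(((p.2:ℕ):ℤ) * ((j 3 0 : ℕ):ℤ))))
      (if ((j 0 0 : ℕ):ZMod d) = ((k 0 0 : ℕ):ZMod d) + ((p.1:ℕ):ZMod d) then (1:ℂ) else 0)
      (if ((k 1 0 : ℕ):ZMod d) = ((j 1 0 : ℕ):ZMod d) + ((p.1:ℕ):ZMod d) then (1:ℂ) else 0)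
      (if ((j 2 0 : ℕ):ZMod d) = ((k 2 0 : ℕ):ZMod d) + ((p.1:ℕ):ZMod d) then (1:ℂ) else 0)
      (if ((k 3 0 : ℕ):ZMod d) = ((j 3 0 : ℕ):ZMod d) + ((p.1:ℕ):ZMod d) then (1:ℂ) else 0)
      (omega d ^ (((p.2:ℕ):ℤ) * s)) (conj_tau_zpow_mul _)
      (hw4 _ _ _ _ _ (by rw [hs]; push_cast; ring))]
    congr 1
    rw [← ind_and, ← ind_and, ← ind_and]
    refine if_congr ?_ rfl rfl
    rw [hc0, hc1, hc2, hc3]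
    simp only [zc, heq]
  have h3 : ∑ p : Fin d × Fin d, F p =
      (if (c0 = c1 ∧ c0 = c2 ∧ c0 = c3) then (1:ℂ) else 0) *
      (if ((s : ZMod d) = 0) then (d:ℂ) else 0) := by
    rw [Fintype.sum_prod_type]
    simp only [h2]
    rw [show (∑ x : Fin d, ∑ y : Fin d,
        (if ((((((x:ℕ):ZMod d) = c0 ∧ ((x:ℕ):ZMod d) = c1) ∧ ((x:ℕ):ZMod d) = c2) ∧
          ((x:ℕ):ZMod d) = c3)) then (1:ℂ) else 0) * omega d ^ (((y:ℕ):ℤ) * s)) =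
        (∑ x : Fin d, if ((((((x:ℕ):ZMod d) = c0 ∧ ((x:ℕ):ZMod d) = c1) ∧ ((x:ℕ):ZMod d) = c2) ∧
          ((x:ℕ):ZMod d) = c3)) then (1:ℂ) else 0) * ∑ y : Fin d, omega d ^ (((y:ℕ):ℤ) * s) from
        by rw [Finset.sum_mul_sum]]
    rw [sum_omega_geom hd]
    congr 1
    rw [sum_fin_cast (f := fun u => if ((((u = c0 ∧ u = c1) ∧ u = c2) ∧ u = c3)) then (1:ℂ) else 0)]
    have hiff : ∀ u : ZMod d, ((((u = c0 ∧ u = c1) ∧ u = c2) ∧ u = c3)) ↔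
        (u = c0 ∧ (c0 = c1 ∧ c0 = c2 ∧ c0 = c3)) := by
      intro u
      constructor
      · rintro ⟨⟨⟨rfl, h1⟩, h2⟩, h3⟩; exact ⟨rfl, h1, h2, h3⟩
      · rintro ⟨rfl, h1, h2, h3⟩; exact ⟨⟨⟨rfl, h1⟩, h2⟩, h3⟩
    simp only [hiff, ind_and]
    rw [← Finset.sum_mul]
    simp [Finset.sum_ite_eq']
  have hseq : ((s : ZMod d) = 0) ↔ (zc (k 0) + zc (k 2) = zc (j 1) + zc (j 3)) := by
    have hcast : ((s : ℤ) : ZMod d) = zc (k 0) - zc (j 1) + zc (k 2) - zc (j 3) := by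
      rw [hs]; simp only [zc]; push_cast; ring
    rw [hcast]
    constructor <;> intro h <;> linear_combination h
  rw [h1, h3]
  rw [if_congr hseq rfl rfl]
  by_cases hA : (c0 = c1 ∧ c0 = c2 ∧ c0 = c3) <;>
    by_cases hB : (zc (k 0) + zc (k 2) = zc (j 1) + zc (j 3)) <;>
      simp [hA, hB, pow_two, hdc]

lemma trace_mul_permOp {I : Type*} [DecidableEq I] [Fintype I]
    (M : Matrix (Fin 4 → I) (Fin 4 → I) ℂ) (π : Equiv.Perm (Fin 4)) :
    trace (M * permOp I π) = ∑ x : Fin 4 → I, M x (fun m => x (π m)) := by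
  classical
  simp only [Matrix.trace, Matrix.diag, Matrix.mul_apply, permOp]
  refine Finset.sum_congr rfl fun x _ => ?_
  have hy : ∀ y : Fin 4 → I,
      (M x y * if ∀ m, y m = x (π m) then 1 else 0) = if y = (fun m => x (π m)) then M x y else 0 := by
    intro y
    by_cases h : y = fun m => x (π m)
    · have h2 : ∀ m, y m = x (π m) := fun m => congrFun h m
      simp [h, h2]
    · have h2 : ¬ (∀ m, y m = x (π m)) := fun hc => h (funext hc)
      simp [h, h2]
  rw [Finset.sum_congr rfl fun y _ => hy y, Finset.sum_ite_eq' Finset.univ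
    (fun m => x (π m)) (fun y => M x y)]
  simp

/-- the indicator appearing in `Q`. -/
def cind (d : ℕ) (y0 z0 y1 z1 y2 z2 y3 z3 : ZMod d) : ℂ :=
  if ((y0 - z0 = z1 - y1 ∧ y0 - z0 = y2 - z2 ∧ y0 - z0 = z3 - y3) ∧ z0 + z2 = y1 + y3)
    then 1 else 0

/-- count associated to a permutation -/
def cntc (d : ℕ) [NeZero d] (π : Equiv.Perm (Fin 4)) : ℂ :=
  ∑ w : Fin 4 → ZMod d,
    cind d (w 0) (w (π 0)) (w 1) (w (π 1)) (w 2) (w (π 2)) (w 3) (w (π 3))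

lemma zc_bijective (hd : d ≠ 0) : Function.Bijective (zc : (Fin 1 → Fin d) → ZMod d) := by
  haveI : NeZero d := ⟨hd⟩
  rw [Fintype.bijective_iff_injective_and_card]
  constructor
  · intro x y hxy
    funext m
    obtain rfl : m = 0 := Subsingleton.elim m 0
    apply Fin.ext
    have := congrArg ZMod.val hxy
    rwa [zc, zc, ZMod.val_natCast_of_lt (x 0).isLt, ZMod.val_natCast_of_lt (y 0).isLt] at this
  · simp [ZMod.card]

lemma trace_Q_permOp [NeZero d] (π : Equiv.Perm (Fin 4)) :
    trace (Q d 1 * permOp (Fin 1 → Fin d) π) = (d : ℂ)⁻¹ * cntc d π := by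
  classical
  have hd : d ≠ 0 := NeZero.ne d
  rw [trace_mul_permOp]
  have hbij : Function.Bijective
      (fun (x : Fin 4 → (Fin 1 → Fin d)) => (fun m => zc (x m) : Fin 4 → ZMod d)) := by
    constructor
    · intro x y hxy
      funext m
      exact (zc_bijective hd).1 (congrFun hxy m)
    · intro w
      choose g hg using fun m => (zc_bijective hd).2 (w m)
      exact ⟨fun m => g m, funext hg⟩
  rw [Fintype.sum_bijective _ hbij _
    (fun w => (d : ℂ)⁻¹ * cind d (w 0) (w (π 0)) (w 1) (w (π 1)) (w 2) (w (π 2)) (w 3) (w (π 3)))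
    (fun x => by rw [Q_apply hd]; rfl)]
  rw [cntc, Finset.mul_sum]

def e4 (X : Type*) : (X × X × X × X) ≃ (Fin 4 → X) where
  toFun p := ![p.1, p.2.1, p.2.2.1, p.2.2.2]
  invFun w := (w 0, w 1, w 2, w 3)
  left_inv p := rfl
  right_inv w := by
    funext m
    fin_cases m <;> rfl

lemma sum_pi4 {X : Type*} [Fintype X] (f : (Fin 4 → X) → ℂ) :
    ∑ w : Fin 4 → X, f w = ∑ a : X, ∑ b : X, ∑ c : X, ∑ e : X, f ![a, b, c, e] := by
  rw [← Equiv.sum_comp (e4 X) f]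
  rw [Fintype.sum_prod_type]
  refine Finset.sum_congr rfl fun a _ => ?_
  rw [Fintype.sum_prod_type]
  refine Finset.sum_congr rfl fun b _ => ?_
  rw [Fintype.sum_prod_type]
  rfl

lemma cntc_quad [NeZero d] (π : Equiv.Perm (Fin 4)) :
    cntc d π = ∑ a : ZMod d, ∑ b : ZMod d, ∑ c : ZMod d, ∑ e : ZMod d,
      cind d (![a,b,c,e] 0) (![a,b,c,e] (π 0)) (![a,b,c,e] 1) (![a,b,c,e] (π 1))
        (![a,b,c,e] 2) (![a,b,c,e] (π 2)) (![a,b,c,e] 3) (![a,b,c,e] (π 3)) := by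
  rw [cntc, sum_pi4]

lemma sum_ind_eq [NeZero d] (v : ZMod d) : ∑ x : ZMod d, (if x = v then (1:ℂ) else 0) = 1 := by
  simp [Finset.sum_ite_eq']

lemma sum_one [NeZero d] : ∑ _x : ZMod d, (1:ℂ) = (d : ℂ) := by
  simp [ZMod.card]



lemma two_tor_iff [NeZero d] (he : Even d) (x : ZMod d) :
    2 * x = 0 ↔ (x = 0 ∨ x = ((d/2 : ℕ) : ZMod d)) := by
  obtain ⟨m, hm⟩ := he
  have hd0 : d ≠ 0 := NeZero.ne d
  have hm0 : m ≠ 0 := by omega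
  have hmd : m < d := by omega
  have hdiv : d / 2 = m := by omega
  have hxv : ((x.val : ℕ) : ZMod d) = x := ZMod.natCast_rightInverse x
  rw [hdiv]
  constructor
  · intro h
    have hx : ((2 * x.val : ℕ) : ZMod d) = 0 := by
      push_cast
      rw [hxv]
      exact h
    rw [ZMod.natCast_eq_zero_iff] at hx
    obtain ⟨k, hk⟩ := hx
    have hv : x.val < d := x.val_lt
    have hk1 : k ≤ 1 := by
      by_contra hgt
      push_neg at hgt
      have h2d : d * 2 ≤ d * k := Nat.mul_le_mul_left d (by omega)
      rw [← hk] at h2d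
      omega
    have hor : x.val = 0 ∨ x.val = m := by
      interval_cases k <;> omega
    rcases hor with h0 | h1
    · left; rw [← hxv, h0]; simp
    · right; rw [← hxv, h1]
  · rintro (rfl | rfl)
    · ring
    · have : ((2 * m : ℕ) : ZMod d) = 0 := by
        have h2m : 2 * m = d := by omega
        rw [h2m, ZMod.natCast_self]
      push_cast at this
      linear_combination this

lemma sum_two_tor [NeZero d] (he : Even d) (t : ZMod d) :
    ∑ x : ZMod d, (if 2*(x - t) = 0 then (1:ℂ) else 0) = 2 := by
  rw [← Equiv.sum_comp (Equiv.addRight t) (fun x => if 2*(x - t) = 0 then (1:ℂ) else 0)]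
  simp only [Equiv.coe_addRight, add_sub_cancel_right]
  have hne : ((d/2 : ℕ) : ZMod d) ≠ 0 := by
    obtain ⟨m, hm⟩ := he
    have hd0 : d ≠ 0 := NeZero.ne d
    have hdiv : d / 2 = m := by omega
    have hm0 : 0 < m := by omega
    intro hc
    rw [hdiv] at hc
    have hdvd := (ZMod.natCast_eq_zero_iff m d).mp hc
    have := Nat.le_of_dvd hm0 hdvd
    omega
  have hsplit : ∀ x : ZMod d, (if 2*x = 0 then (1:ℂ) else 0) =
      (if x = 0 then 1 else 0) + (if x = ((d/2:ℕ):ZMod d) then 1 else 0) := by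
    intro x
    rw [if_congr (two_tor_iff he x) rfl rfl]
    have hne' : ¬ ((0:ZMod d) = ((d/2:ℕ):ZMod d)) := fun hh => hne hh.symm
    by_cases h1 : x = 0
    · simp [h1, hne']
    · by_cases h2 : x = ((d/2:ℕ):ZMod d) <;> simp [h1, h2, hne]
  simp only [hsplit]
  rw [Finset.sum_add_distrib, sum_ind_eq, sum_ind_eq]
  norm_num



lemma cntP1 [NeZero d] (π : Equiv.Perm (Fin 4))
    (h0 : π 0 = 0) (h1 : π 1 = 1) (h2 : π 2 = 2) (h3 : π 3 = 3) :
    cntc d π = (d:ℂ)^3 := by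
  rw [cntc_quad, h0, h1, h2, h3]
  simp only [Matrix.cons_val_zero, Matrix.cons_val_one, Matrix.head_cons,
    Matrix.cons_val_two, Matrix.tail_cons, Matrix.cons_val_three]
  have hkey : ∀ a b c e : ZMod d,
      cind d a a b b c c e e = (if (e = a + c - b) then (1:ℂ) else 0) := by
    intro a b c e
    rw [cind]
    refine if_congr ?_ rfl rfl
    constructor
    · rintro ⟨⟨h1, h2, h3⟩, h4⟩
      exact (by linear_combination -h4)
    · rintro ⟨rfl⟩
      exact ⟨⟨by ring, by ring, by ring⟩, by ring⟩
  simp only [hkey, ind_and, ← Finset.mul_sum, ← Finset.sum_mul, sum_ind_eq, sum_one]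
  simp [Finset.sum_const, ZMod.card, Finset.card_univ]
  try push_cast
  try ring


lemma cntP2 [NeZero d] (π : Equiv.Perm (Fin 4))
    (h0 : π 0 = 1) (h1 : π 1 = 0) (h2 : π 2 = 2) (h3 : π 3 = 3) :
    cntc d π = (d:ℂ)^2 := by
  rw [cntc_quad, h0, h1, h2, h3]
  simp only [Matrix.cons_val_zero, Matrix.cons_val_one, Matrix.head_cons,
    Matrix.cons_val_two, Matrix.tail_cons, Matrix.cons_val_three]
  have hkey : ∀ a b c e : ZMod d,
      cind d a b b a c c e e = (if (b = a ∧ e = c) then (1:ℂ) else 0) := by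
    intro a b c e
    rw [cind]
    refine if_congr ?_ rfl rfl
    constructor
    · rintro ⟨⟨h1, h2, h3⟩, h4⟩
      exact ⟨by linear_combination -h2, by linear_combination -h4⟩
    · rintro ⟨rfl, rfl⟩
      exact ⟨⟨by ring, by ring, by ring⟩, by ring⟩
  simp only [hkey, ind_and, ← Finset.mul_sum, ← Finset.sum_mul, sum_ind_eq, sum_one]
  simp [Finset.sum_const, ZMod.card, Finset.card_univ]
  try push_cast
  try ring


lemma cntP3 [NeZero d] (π : Equiv.Perm (Fin 4))
    (h0 : π 0 = 2) (h1 : π 1 = 1) (h2 : π 2 = 0) (h3 : π 3 = 3) :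
    cntc d π = (d:ℂ)^2 := by
  rw [cntc_quad, h0, h1, h2, h3]
  simp only [Matrix.cons_val_zero, Matrix.cons_val_one, Matrix.head_cons,
    Matrix.cons_val_two, Matrix.tail_cons, Matrix.cons_val_three]
  have hkey : ∀ a b c e : ZMod d,
      cind d a c b b c a e e = (if (c = a ∧ e = a + a - b) then (1:ℂ) else 0) := by
    intro a b c e
    rw [cind]
    refine if_congr ?_ rfl rfl
    constructor
    · rintro ⟨⟨h1, h2, h3⟩, h4⟩
      exact ⟨by linear_combination -h1, by linear_combination -h4 - h1⟩
    · rintro ⟨rfl, rfl⟩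
      exact ⟨⟨by ring, by ring, by ring⟩, by ring⟩
  simp only [hkey, ind_and, ← Finset.mul_sum, ← Finset.sum_mul, sum_ind_eq, sum_one]
  simp [Finset.sum_const, ZMod.card, Finset.card_univ]
  try push_cast
  try ring


lemma cntP4 [NeZero d] (π : Equiv.Perm (Fin 4))
    (h0 : π 0 = 3) (h1 : π 1 = 1) (h2 : π 2 = 2) (h3 : π 3 = 0) :
    cntc d π = (d:ℂ)^2 := by
  rw [cntc_quad, h0, h1, h2, h3]
  simp only [Matrix.cons_val_zero, Matrix.cons_val_one, Matrix.head_cons,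
    Matrix.cons_val_two, Matrix.tail_cons, Matrix.cons_val_three]
  have hkey : ∀ a b c e : ZMod d,
      cind d a e b b c c e a = (if (c = b ∧ e = a) then (1:ℂ) else 0) := by
    intro a b c e
    rw [cind]
    refine if_congr ?_ rfl rfl
    constructor
    · rintro ⟨⟨h1, h2, h3⟩, h4⟩
      exact ⟨by linear_combination h4, by linear_combination -h1⟩
    · rintro ⟨rfl, rfl⟩
      exact ⟨⟨by ring, by ring, by ring⟩, by ring⟩
  simp only [hkey, ind_and, ← Finset.mul_sum, ← Finset.sum_mul, sum_ind_eq, sum_one]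
  simp [Finset.sum_const, ZMod.card, Finset.card_univ]
  try push_cast
  try ring


lemma cntP5 [NeZero d] (π : Equiv.Perm (Fin 4))
    (h0 : π 0 = 0) (h1 : π 1 = 2) (h2 : π 2 = 1) (h3 : π 3 = 3) :
    cntc d π = (d:ℂ)^2 := by
  rw [cntc_quad, h0, h1, h2, h3]
  simp only [Matrix.cons_val_zero, Matrix.cons_val_one, Matrix.head_cons,
    Matrix.cons_val_two, Matrix.tail_cons, Matrix.cons_val_three]
  have hkey : ∀ a b c e : ZMod d,
      cind d a a b c c b e e = (if (c = b ∧ e = a) then (1:ℂ) else 0) := by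
    intro a b c e
    rw [cind]
    refine if_congr ?_ rfl rfl
    constructor
    · rintro ⟨⟨h1, h2, h3⟩, h4⟩
      exact ⟨by linear_combination -h1, by linear_combination -h4⟩
    · rintro ⟨rfl, rfl⟩
      exact ⟨⟨by ring, by ring, by ring⟩, by ring⟩
  simp only [hkey, ind_and, ← Finset.mul_sum, ← Finset.sum_mul, sum_ind_eq, sum_one]
  simp [Finset.sum_const, ZMod.card, Finset.card_univ]
  try push_cast
  try ring


lemma cntP6 [NeZero d] (π : Equiv.Perm (Fin 4))
    (h0 : π 0 = 0) (h1 : π 1 = 3) (h2 : π 2 = 2) (h3 : π 3 = 1) :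
    cntc d π = (d:ℂ)^2 := by
  rw [cntc_quad, h0, h1, h2, h3]
  simp only [Matrix.cons_val_zero, Matrix.cons_val_one, Matrix.head_cons,
    Matrix.cons_val_two, Matrix.tail_cons, Matrix.cons_val_three]
  have hkey : ∀ a b c e : ZMod d,
      cind d a a b e c c e b = (if (c = b + b - a ∧ e = b) then (1:ℂ) else 0) := by
    intro a b c e
    rw [cind]
    refine if_congr ?_ rfl rfl
    constructor
    · rintro ⟨⟨h1, h2, h3⟩, h4⟩
      exact ⟨by linear_combination h4 + h3, by linear_combination h3⟩
    · rintro ⟨rfl, rfl⟩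
      exact ⟨⟨by ring, by ring, by ring⟩, by ring⟩
  simp only [hkey, ind_and, ← Finset.mul_sum, ← Finset.sum_mul, sum_ind_eq, sum_one]
  simp [Finset.sum_const, ZMod.card, Finset.card_univ]
  try push_cast
  try ring


lemma cntP7 [NeZero d] (π : Equiv.Perm (Fin 4))
    (h0 : π 0 = 0) (h1 : π 1 = 1) (h2 : π 2 = 3) (h3 : π 3 = 2) :
    cntc d π = (d:ℂ)^2 := by
  rw [cntc_quad, h0, h1, h2, h3]
  simp only [Matrix.cons_val_zero, Matrix.cons_val_one, Matrix.head_cons,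
    Matrix.cons_val_two, Matrix.tail_cons, Matrix.cons_val_three]
  have hkey : ∀ a b c e : ZMod d,
      cind d a a b b c e e c = (if (b = a ∧ e = c) then (1:ℂ) else 0) := by
    intro a b c e
    rw [cind]
    refine if_congr ?_ rfl rfl
    constructor
    · rintro ⟨⟨h1, h2, h3⟩, h4⟩
      exact ⟨by linear_combination -h4, by linear_combination h2⟩
    · rintro ⟨rfl, rfl⟩
      exact ⟨⟨by ring, by ring, by ring⟩, by ring⟩
  simp only [hkey, ind_and, ← Finset.mul_sum, ← Finset.sum_mul, sum_ind_eq, sum_one]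
  simp [Finset.sum_const, ZMod.card, Finset.card_univ]
  try push_cast
  try ring


lemma cntP8 [NeZero d] (π : Equiv.Perm (Fin 4))
    (h0 : π 0 = 1) (h1 : π 1 = 2) (h2 : π 2 = 0) (h3 : π 3 = 3) :
    cntc d π = (d:ℂ) := by
  rw [cntc_quad, h0, h1, h2, h3]
  simp only [Matrix.cons_val_zero, Matrix.cons_val_one, Matrix.head_cons,
    Matrix.cons_val_two, Matrix.tail_cons, Matrix.cons_val_three]
  have hkey : ∀ a b c e : ZMod d,
      cind d a b b c c a e e = (if (b = a ∧ c = a ∧ e = a) then (1:ℂ) else 0) := by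
    intro a b c e
    rw [cind]
    refine if_congr ?_ rfl rfl
    constructor
    · rintro ⟨⟨h1, h2, h3⟩, h4⟩
      exact ⟨by linear_combination -h3, by linear_combination -h1, by linear_combination -h4⟩
    · rintro ⟨rfl, rfl, rfl⟩
      exact ⟨⟨by ring, by ring, by ring⟩, by ring⟩
  simp only [hkey, ind_and, ← Finset.mul_sum, ← Finset.sum_mul, sum_ind_eq, sum_one]
  simp [Finset.sum_const, ZMod.card, Finset.card_univ]
  try push_cast
  try ring


lemma cntP9 [NeZero d] (π : Equiv.Perm (Fin 4))
    (h0 : π 0 = 2) (h1 : π 1 = 0) (h2 : π 2 = 1) (h3 : π 3 = 3) :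
    cntc d π = (d:ℂ) := by
  rw [cntc_quad, h0, h1, h2, h3]
  simp only [Matrix.cons_val_zero, Matrix.cons_val_one, Matrix.head_cons,
    Matrix.cons_val_two, Matrix.tail_cons, Matrix.cons_val_three]
  have hkey : ∀ a b c e : ZMod d,
      cind d a c b a c b e e = (if (b = a ∧ c = a ∧ e = a) then (1:ℂ) else 0) := by
    intro a b c e
    rw [cind]
    refine if_congr ?_ rfl rfl
    constructor
    · rintro ⟨⟨h1, h2, h3⟩, h4⟩
      exact ⟨by linear_combination h1 - h3, by linear_combination -h3, by linear_combination -h4 - h3⟩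
    · rintro ⟨rfl, rfl, rfl⟩
      exact ⟨⟨by ring, by ring, by ring⟩, by ring⟩
  simp only [hkey, ind_and, ← Finset.mul_sum, ← Finset.sum_mul, sum_ind_eq, sum_one]
  simp [Finset.sum_const, ZMod.card, Finset.card_univ]
  try push_cast
  try ring


lemma cntP10 [NeZero d] (π : Equiv.Perm (Fin 4))
    (h0 : π 0 = 1) (h1 : π 1 = 3) (h2 : π 2 = 2) (h3 : π 3 = 0) :
    cntc d π = (d:ℂ) := by
  rw [cntc_quad, h0, h1, h2, h3]
  simp only [Matrix.cons_val_zero, Matrix.cons_val_one, Matrix.head_cons,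
    Matrix.cons_val_two, Matrix.tail_cons, Matrix.cons_val_three]
  have hkey : ∀ a b c e : ZMod d,
      cind d a b b e c c e a = (if (b = a ∧ c = a ∧ e = a) then (1:ℂ) else 0) := by
    intro a b c e
    rw [cind]
    refine if_congr ?_ rfl rfl
    constructor
    · rintro ⟨⟨h1, h2, h3⟩, h4⟩
      exact ⟨by linear_combination -h2, by linear_combination h4 - h1, by linear_combination -h1⟩
    · rintro ⟨rfl, rfl, rfl⟩
      exact ⟨⟨by ring, by ring, by ring⟩, by ring⟩
  simp only [hkey, ind_and, ← Finset.mul_sum, ← Finset.sum_mul, sum_ind_eq, sum_one]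
  simp [Finset.sum_const, ZMod.card, Finset.card_univ]
  try push_cast
  try ring


lemma cntP11 [NeZero d] (π : Equiv.Perm (Fin 4))
    (h0 : π 0 = 3) (h1 : π 1 = 0) (h2 : π 2 = 2) (h3 : π 3 = 1) :
    cntc d π = (d:ℂ) := by
  rw [cntc_quad, h0, h1, h2, h3]
  simp only [Matrix.cons_val_zero, Matrix.cons_val_one, Matrix.head_cons,
    Matrix.cons_val_two, Matrix.tail_cons, Matrix.cons_val_three]
  have hkey : ∀ a b c e : ZMod d,
      cind d a e b a c c e b = (if (b = a ∧ c = a ∧ e = a) then (1:ℂ) else 0) := by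
    intro a b c e
    rw [cind]
    refine if_congr ?_ rfl rfl
    constructor
    · rintro ⟨⟨h1, h2, h3⟩, h4⟩
      exact ⟨by linear_combination -h3, by linear_combination h4 - h3, by linear_combination -h2⟩
    · rintro ⟨rfl, rfl, rfl⟩
      exact ⟨⟨by ring, by ring, by ring⟩, by ring⟩
  simp only [hkey, ind_and, ← Finset.mul_sum, ← Finset.sum_mul, sum_ind_eq, sum_one]
  simp [Finset.sum_const, ZMod.card, Finset.card_univ]
  try push_cast
  try ring


lemma cntP12 [NeZero d] (π : Equiv.Perm (Fin 4))
    (h0 : π 0 = 2) (h1 : π 1 = 1) (h2 : π 2 = 3) (h3 : π 3 = 0) :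
    cntc d π = (d:ℂ) := by
  rw [cntc_quad, h0, h1, h2, h3]
  simp only [Matrix.cons_val_zero, Matrix.cons_val_one, Matrix.head_cons,
    Matrix.cons_val_two, Matrix.tail_cons, Matrix.cons_val_three]
  have hkey : ∀ a b c e : ZMod d,
      cind d a c b b c e e a = (if (b = a ∧ c = a ∧ e = a) then (1:ℂ) else 0) := by
    intro a b c e
    rw [cind]
    refine if_congr ?_ rfl rfl
    constructor
    · rintro ⟨⟨h1, h2, h3⟩, h4⟩
      exact ⟨by linear_combination -h4 - h1, by linear_combination -h1, by linear_combination h2 - 2 * h1⟩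
    · rintro ⟨rfl, rfl, rfl⟩
      exact ⟨⟨by ring, by ring, by ring⟩, by ring⟩
  simp only [hkey, ind_and, ← Finset.mul_sum, ← Finset.sum_mul, sum_ind_eq, sum_one]
  simp [Finset.sum_const, ZMod.card, Finset.card_univ]
  try push_cast
  try ring


lemma cntP13 [NeZero d] (π : Equiv.Perm (Fin 4))
    (h0 : π 0 = 3) (h1 : π 1 = 1) (h2 : π 2 = 0) (h3 : π 3 = 2) :
    cntc d π = (d:ℂ) := by
  rw [cntc_quad, h0, h1, h2, h3]
  simp only [Matrix.cons_val_zero, Matrix.cons_val_one, Matrix.head_cons,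
    Matrix.cons_val_two, Matrix.tail_cons, Matrix.cons_val_three]
  have hkey : ∀ a b c e : ZMod d,
      cind d a e b b c a e c = (if (b = a ∧ c = a ∧ e = a) then (1:ℂ) else 0) := by
    intro a b c e
    rw [cind]
    refine if_congr ?_ rfl rfl
    constructor
    · rintro ⟨⟨h1, h2, h3⟩, h4⟩
      exact ⟨by linear_combination -h4, by linear_combination -h3, by linear_combination -h1⟩
    · rintro ⟨rfl, rfl, rfl⟩
      exact ⟨⟨by ring, by ring, by ring⟩, by ring⟩
  simp only [hkey, ind_and, ← Finset.mul_sum, ← Finset.sum_mul, sum_ind_eq, sum_one]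
  simp [Finset.sum_const, ZMod.card, Finset.card_univ]
  try push_cast
  try ring


lemma cntP14 [NeZero d] (π : Equiv.Perm (Fin 4))
    (h0 : π 0 = 0) (h1 : π 1 = 2) (h2 : π 2 = 3) (h3 : π 3 = 1) :
    cntc d π = (d:ℂ) := by
  rw [cntc_quad, h0, h1, h2, h3]
  simp only [Matrix.cons_val_zero, Matrix.cons_val_one, Matrix.head_cons,
    Matrix.cons_val_two, Matrix.tail_cons, Matrix.cons_val_three]
  have hkey : ∀ a b c e : ZMod d,
      cind d a a b c c e e b = (if (b = a ∧ c = a ∧ e = a) then (1:ℂ) else 0) := by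
    intro a b c e
    rw [cind]
    refine if_congr ?_ rfl rfl
    constructor
    · rintro ⟨⟨h1, h2, h3⟩, h4⟩
      exact ⟨by linear_combination -h4, by linear_combination -h1 - h4, by linear_combination h3 - h4⟩
    · rintro ⟨rfl, rfl, rfl⟩
      exact ⟨⟨by ring, by ring, by ring⟩, by ring⟩
  simp only [hkey, ind_and, ← Finset.mul_sum, ← Finset.sum_mul, sum_ind_eq, sum_one]
  simp [Finset.sum_const, ZMod.card, Finset.card_univ]
  try push_cast
  try ring


lemma cntP15 [NeZero d] (π : Equiv.Perm (Fin 4))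
    (h0 : π 0 = 0) (h1 : π 1 = 3) (h2 : π 2 = 1) (h3 : π 3 = 2) :
    cntc d π = (d:ℂ) := by
  rw [cntc_quad, h0, h1, h2, h3]
  simp only [Matrix.cons_val_zero, Matrix.cons_val_one, Matrix.head_cons,
    Matrix.cons_val_two, Matrix.tail_cons, Matrix.cons_val_three]
  have hkey : ∀ a b c e : ZMod d,
      cind d a a b e c b e c = (if (b = a ∧ c = a ∧ e = a) then (1:ℂ) else 0) := by
    intro a b c e
    rw [cind]
    refine if_congr ?_ rfl rfl
    constructor
    · rintro ⟨⟨h1, h2, h3⟩, h4⟩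
      exact ⟨by linear_combination h1 - h4, by linear_combination h1 - h2 - h4, by linear_combination -h4⟩
    · rintro ⟨rfl, rfl, rfl⟩
      exact ⟨⟨by ring, by ring, by ring⟩, by ring⟩
  simp only [hkey, ind_and, ← Finset.mul_sum, ← Finset.sum_mul, sum_ind_eq, sum_one]
  simp [Finset.sum_const, ZMod.card, Finset.card_univ]
  try push_cast
  try ring


lemma cntP16 [NeZero d] (π : Equiv.Perm (Fin 4))
    (h0 : π 0 = 1) (h1 : π 1 = 0) (h2 : π 2 = 3) (h3 : π 3 = 2) :
    cntc d π = (d:ℂ)^3 := by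
  rw [cntc_quad, h0, h1, h2, h3]
  simp only [Matrix.cons_val_zero, Matrix.cons_val_one, Matrix.head_cons,
    Matrix.cons_val_two, Matrix.tail_cons, Matrix.cons_val_three]
  have hkey : ∀ a b c e : ZMod d,
      cind d a b b a c e e c = (if (e = c - a + b) then (1:ℂ) else 0) := by
    intro a b c e
    rw [cind]
    refine if_congr ?_ rfl rfl
    constructor
    · rintro ⟨⟨h1, h2, h3⟩, h4⟩
      exact (by linear_combination h2)
    · rintro ⟨rfl⟩
      exact ⟨⟨by ring, by ring, by ring⟩, by ring⟩
  simp only [hkey, ind_and, ← Finset.mul_sum, ← Finset.sum_mul, sum_ind_eq, sum_one]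
  simp [Finset.sum_const, ZMod.card, Finset.card_univ]
  try push_cast
  try ring


lemma cntP17 [NeZero d] (π : Equiv.Perm (Fin 4))
    (h0 : π 0 = 3) (h1 : π 1 = 2) (h2 : π 2 = 1) (h3 : π 3 = 0) :
    cntc d π = (d:ℂ)^3 := by
  rw [cntc_quad, h0, h1, h2, h3]
  simp only [Matrix.cons_val_zero, Matrix.cons_val_one, Matrix.head_cons,
    Matrix.cons_val_two, Matrix.tail_cons, Matrix.cons_val_three]
  have hkey : ∀ a b c e : ZMod d,
      cind d a e b c c b e a = (if (e = a - c + b) then (1:ℂ) else 0) := by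
    intro a b c e
    rw [cind]
    refine if_congr ?_ rfl rfl
    constructor
    · rintro ⟨⟨h1, h2, h3⟩, h4⟩
      exact (by linear_combination -h1)
    · rintro ⟨rfl⟩
      exact ⟨⟨by ring, by ring, by ring⟩, by ring⟩
  simp only [hkey, ind_and, ← Finset.mul_sum, ← Finset.sum_mul, sum_ind_eq, sum_one]
  simp [Finset.sum_const, ZMod.card, Finset.card_univ]
  try push_cast
  try ring


lemma cntP19 [NeZero d] (π : Equiv.Perm (Fin 4))
    (h0 : π 0 = 1) (h1 : π 1 = 2) (h2 : π 2 = 3) (h3 : π 3 = 0) :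
    cntc d π = (d:ℂ)^2 := by
  rw [cntc_quad, h0, h1, h2, h3]
  simp only [Matrix.cons_val_zero, Matrix.cons_val_one, Matrix.head_cons,
    Matrix.cons_val_two, Matrix.tail_cons, Matrix.cons_val_three]
  have hkey : ∀ a b c e : ZMod d,
      cind d a b b c c e e a = (if (c = a ∧ e = b) then (1:ℂ) else 0) := by
    intro a b c e
    rw [cind]
    refine if_congr ?_ rfl rfl
    constructor
    · rintro ⟨⟨h1, h2, h3⟩, h4⟩
      exact ⟨by linear_combination -h1, by linear_combination h3⟩
    · rintro ⟨rfl, rfl⟩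
      exact ⟨⟨by ring, by ring, by ring⟩, by ring⟩
  simp only [hkey, ind_and, ← Finset.mul_sum, ← Finset.sum_mul, sum_ind_eq, sum_one]
  simp [Finset.sum_const, ZMod.card, Finset.card_univ]
  try push_cast
  try ring


lemma cntP20 [NeZero d] (π : Equiv.Perm (Fin 4))
    (h0 : π 0 = 3) (h1 : π 1 = 0) (h2 : π 2 = 1) (h3 : π 3 = 2) :
    cntc d π = (d:ℂ)^2 := by
  rw [cntc_quad, h0, h1, h2, h3]
  simp only [Matrix.cons_val_zero, Matrix.cons_val_one, Matrix.head_cons,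
    Matrix.cons_val_two, Matrix.tail_cons, Matrix.cons_val_three]
  have hkey : ∀ a b c e : ZMod d,
      cind d a e b a c b e c = (if (c = a ∧ e = b) then (1:ℂ) else 0) := by
    intro a b c e
    rw [cind]
    refine if_congr ?_ rfl rfl
    constructor
    · rintro ⟨⟨h1, h2, h3⟩, h4⟩
      exact ⟨by linear_combination -h3, by linear_combination -h1⟩
    · rintro ⟨rfl, rfl⟩
      exact ⟨⟨by ring, by ring, by ring⟩, by ring⟩
  simp only [hkey, ind_and, ← Finset.mul_sum, ← Finset.sum_mul, sum_ind_eq, sum_one]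
  simp [Finset.sum_const, ZMod.card, Finset.card_univ]
  try push_cast
  try ring


lemma cntP21 [NeZero d] (π : Equiv.Perm (Fin 4))
    (h0 : π 0 = 1) (h1 : π 1 = 3) (h2 : π 2 = 0) (h3 : π 3 = 2) :
    cntc d π = (d:ℂ)^2 := by
  rw [cntc_quad, h0, h1, h2, h3]
  simp only [Matrix.cons_val_zero, Matrix.cons_val_one, Matrix.head_cons,
    Matrix.cons_val_two, Matrix.tail_cons, Matrix.cons_val_three]
  have hkey : ∀ a b c e : ZMod d,
      cind d a b b e c a e c = (if (c = a + a - b ∧ e = a) then (1:ℂ) else 0) := by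
    intro a b c e
    rw [cind]
    refine if_congr ?_ rfl rfl
    constructor
    · rintro ⟨⟨h1, h2, h3⟩, h4⟩
      exact ⟨by linear_combination -h2, by linear_combination -h1⟩
    · rintro ⟨rfl, rfl⟩
      exact ⟨⟨by ring, by ring, by ring⟩, by ring⟩
  simp only [hkey, ind_and, ← Finset.mul_sum, ← Finset.sum_mul, sum_ind_eq, sum_one]
  simp [Finset.sum_const, ZMod.card, Finset.card_univ]
  try push_cast
  try ring


lemma cntP22 [NeZero d] (π : Equiv.Perm (Fin 4))
    (h0 : π 0 = 2) (h1 : π 1 = 0) (h2 : π 2 = 3) (h3 : π 3 = 1) :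
    cntc d π = (d:ℂ)^2 := by
  rw [cntc_quad, h0, h1, h2, h3]
  simp only [Matrix.cons_val_zero, Matrix.cons_val_one, Matrix.head_cons,
    Matrix.cons_val_two, Matrix.tail_cons, Matrix.cons_val_three]
  have hkey : ∀ a b c e : ZMod d,
      cind d a c b a c e e b = (if (c = b ∧ e = b + b - a) then (1:ℂ) else 0) := by
    intro a b c e
    rw [cind]
    refine if_congr ?_ rfl rfl
    constructor
    · rintro ⟨⟨h1, h2, h3⟩, h4⟩
      exact ⟨by linear_combination h4, by linear_combination h3 + h4⟩
    · rintro ⟨rfl, rfl⟩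
      exact ⟨⟨by ring, by ring, by ring⟩, by ring⟩
  simp only [hkey, ind_and, ← Finset.mul_sum, ← Finset.sum_mul, sum_ind_eq, sum_one]
  simp [Finset.sum_const, ZMod.card, Finset.card_univ]
  try push_cast
  try ring


lemma cntP24 [NeZero d] (π : Equiv.Perm (Fin 4))
    (h0 : π 0 = 3) (h1 : π 1 = 2) (h2 : π 2 = 0) (h3 : π 3 = 1) :
    cntc d π = (d:ℂ)^2 := by
  rw [cntc_quad, h0, h1, h2, h3]
  simp only [Matrix.cons_val_zero, Matrix.cons_val_one, Matrix.head_cons,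
    Matrix.cons_val_two, Matrix.tail_cons, Matrix.cons_val_three]
  have hkey : ∀ a b c e : ZMod d,
      cind d a e b c c a e b = (if (b = a ∧ e = a + a - c) then (1:ℂ) else 0) := by
    intro a b c e
    rw [cind]
    refine if_congr ?_ rfl rfl
    constructor
    · rintro ⟨⟨h1, h2, h3⟩, h4⟩
      exact ⟨by linear_combination -h3, by linear_combination -h2⟩
    · rintro ⟨rfl, rfl⟩
      exact ⟨⟨by ring, by ring, by ring⟩, by ring⟩
  simp only [hkey, ind_and, ← Finset.mul_sum, ← Finset.sum_mul, sum_ind_eq, sum_one]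
  simp [Finset.sum_const, ZMod.card, Finset.card_univ]
  try push_cast
  try ring


lemma cntP18 [NeZero d] (he : Even d) (π : Equiv.Perm (Fin 4))
    (h0 : π 0 = 2) (h1 : π 1 = 3) (h2 : π 2 = 0) (h3 : π 3 = 1) :
    cntc d π = 4 * (d:ℂ) := by
  rw [cntc_quad, h0, h1, h2, h3]
  simp only [Matrix.cons_val_zero, Matrix.cons_val_one, Matrix.head_cons,
    Matrix.cons_val_two, Matrix.tail_cons, Matrix.cons_val_three]
  have hkey : ∀ a b c e : ZMod d,
      cind d a c b e c a e b =
      (if (2*(b - a) = 0 ∧ 2*(c - a) = 0 ∧ e = b - a + c) then (1:ℂ) else 0) := by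
    intro a b c e
    rw [cind]
    refine if_congr ?_ rfl rfl
    constructor
    · rintro ⟨⟨h1, h2, h3⟩, h4⟩
      exact ⟨by linear_combination -h4 - h3, by linear_combination -h2, by linear_combination h3⟩
    · rintro ⟨g1, g2, rfl⟩
      exact ⟨⟨by linear_combination -g2, by linear_combination -g2, by ring⟩,
        by linear_combination -g1⟩
  simp only [hkey, ind_and, ← Finset.mul_sum, ← Finset.sum_mul, sum_ind_eq,
    sum_two_tor he, sum_one]
  try simp [Finset.sum_const, ZMod.card, Finset.card_univ]
  try push_cast
  try ring

lemma cntP23 [NeZero d] (π : Equiv.Perm (Fin 4))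
    (h0 : π 0 = 2) (h1 : π 1 = 3) (h2 : π 2 = 1) (h3 : π 3 = 0) :
    cntc d π = (d:ℂ)^2 := by
  rw [cntc_quad, h0, h1, h2, h3]
  simp only [Matrix.cons_val_zero, Matrix.cons_val_one, Matrix.head_cons,
    Matrix.cons_val_two, Matrix.tail_cons, Matrix.cons_val_three]
  have hkey : ∀ a b c e : ZMod d,
      cind d a c b e c b e a =
      (if (b = c + c - a ∧ e = c) then (1:ℂ) else 0) := by
    intro a b c e
    rw [cind]
    refine if_congr ?_ rfl rfl
    constructor
    · rintro ⟨⟨h1, h2, h3⟩, h4⟩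
      exact ⟨by linear_combination h2, by linear_combination h3⟩
    · rintro ⟨rfl, rfl⟩
      exact ⟨⟨by ring, by ring, by ring⟩, by ring⟩
  simp only [hkey, ind_and, ← Finset.mul_sum, ← Finset.sum_mul, sum_ind_eq, sum_one]
  have hsw : ∀ a : ZMod d,
      (∑ b : ZMod d, ∑ c : ZMod d, (if b = c + c - a then (1:ℂ) else 0)) =
      ∑ c : ZMod d, ∑ b : ZMod d, (if b = c + c - a then (1:ℂ) else 0) :=
    fun a => Finset.sum_comm
  simp only [hsw, sum_ind_eq, sum_one]
  simp [Finset.sum_const, ZMod.card, Finset.card_univ]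
  try push_cast
  try ring



def p1 : Equiv.Perm (Fin 4) := ⟨![0,1,2,3], ![0,1,2,3], by decide, by decide⟩
def p2 : Equiv.Perm (Fin 4) := ⟨![1,0,2,3], ![1,0,2,3], by decide, by decide⟩
def p3 : Equiv.Perm (Fin 4) := ⟨![2,1,0,3], ![2,1,0,3], by decide, by decide⟩
def p4 : Equiv.Perm (Fin 4) := ⟨![3,1,2,0], ![3,1,2,0], by decide, by decide⟩
def p5 : Equiv.Perm (Fin 4) := ⟨![0,2,1,3], ![0,2,1,3], by decide, by decide⟩
def p6 : Equiv.Perm (Fin 4) := ⟨![0,3,2,1], ![0,3,2,1], by decide, by decide⟩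
def p7 : Equiv.Perm (Fin 4) := ⟨![0,1,3,2], ![0,1,3,2], by decide, by decide⟩
def p8 : Equiv.Perm (Fin 4) := ⟨![1,2,0,3], ![2,0,1,3], by decide, by decide⟩
def p9 : Equiv.Perm (Fin 4) := ⟨![2,0,1,3], ![1,2,0,3], by decide, by decide⟩
def p10 : Equiv.Perm (Fin 4) := ⟨![1,3,2,0], ![3,0,2,1], by decide, by decide⟩
def p11 : Equiv.Perm (Fin 4) := ⟨![3,0,2,1], ![1,3,2,0], by decide, by decide⟩
def p12 : Equiv.Perm (Fin 4) := ⟨![2,1,3,0], ![3,1,0,2], by decide, by decide⟩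
def p13 : Equiv.Perm (Fin 4) := ⟨![3,1,0,2], ![2,1,3,0], by decide, by decide⟩
def p14 : Equiv.Perm (Fin 4) := ⟨![0,2,3,1], ![0,3,1,2], by decide, by decide⟩
def p15 : Equiv.Perm (Fin 4) := ⟨![0,3,1,2], ![0,2,3,1], by decide, by decide⟩
def p16 : Equiv.Perm (Fin 4) := ⟨![1,0,3,2], ![1,0,3,2], by decide, by decide⟩
def p17 : Equiv.Perm (Fin 4) := ⟨![3,2,1,0], ![3,2,1,0], by decide, by decide⟩
def p18 : Equiv.Perm (Fin 4) := ⟨![2,3,0,1], ![2,3,0,1], by decide, by decide⟩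
def p19 : Equiv.Perm (Fin 4) := ⟨![1,2,3,0], ![3,0,1,2], by decide, by decide⟩
def p20 : Equiv.Perm (Fin 4) := ⟨![3,0,1,2], ![1,2,3,0], by decide, by decide⟩
def p21 : Equiv.Perm (Fin 4) := ⟨![1,3,0,2], ![2,0,3,1], by decide, by decide⟩
def p22 : Equiv.Perm (Fin 4) := ⟨![2,0,3,1], ![1,3,0,2], by decide, by decide⟩
def p23 : Equiv.Perm (Fin 4) := ⟨![2,3,1,0], ![3,2,0,1], by decide, by decide⟩
def p24 : Equiv.Perm (Fin 4) := ⟨![3,2,0,1], ![2,3,1,0], by decide, by decide⟩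

def gvec : Fin 24 → Equiv.Perm (Fin 4) := ![p1, p2, p3, p4, p5, p6, p7, p8, p9, p10, p11, p12, p13, p14, p15, p16, p17, p18, p19, p20, p21, p22, p23, p24]

lemma gvec_bij : Function.Bijective gvec := by
  rw [Fintype.bijective_iff_injective_and_card]
  constructor
  · decide
  · simp [Fintype.card_perm]
    norm_num [Nat.factorial]


end Aux

/-- If `d` is even and `n = 1`, then `Tr(Q Π_{sym⁴}) = (d+2)²/8`. -/
theorem trace_Q_piSym4_even_single_qudit (d : ℕ) (hd : 2 ≤ d) (heven : Even d) :
    trace (Q d 1 * piSym4 (Fin 1 → Fin d)) = ((d : ℂ) + 2) ^ 2 / 8 := by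
  haveI : NeZero d := ⟨by omega⟩
  have hdc : (d:ℂ) ≠ 0 := Nat.cast_ne_zero.mpr (by omega)
  rw [piSym4, Matrix.mul_smul, Matrix.mul_sum, trace_smul, Matrix.trace_sum]
  rw [show (∑ π : Equiv.Perm (Fin 4), trace (Q d 1 * permOp (Fin 1 → Fin d) π)) =
      ∑ i : Fin 24, trace (Q d 1 * permOp (Fin 1 → Fin d) (gvec i)) from
    (Fintype.sum_bijective gvec gvec_bij _ _ (fun i => rfl)).symm]
  simp only [Fin.sum_univ_succ, Fin.sum_univ_zero, gvec, Matrix.cons_val_zero,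
    Matrix.cons_val_succ]
  simp only [trace_Q_permOp]
  rw [cntP1 p1 (by decide) (by decide) (by decide) (by decide), cntP2 p2 (by decide) (by decide) (by decide) (by decide), cntP3 p3 (by decide) (by decide) (by decide) (by decide), cntP4 p4 (by decide) (by decide) (by decide) (by decide), cntP5 p5 (by decide) (by decide) (by decide) (by decide), cntP6 p6 (by decide) (by decide) (by decide) (by decide), cntP7 p7 (by decide) (by decide) (by decide) (by decide), cntP8 p8 (by decide) (by decide) (by decide) (by decide), cntP9 p9 (by decide) (by decide) (by decide) (by decide), cntP10 p10 (by decide) (by decide) (by decide) (by decide), cntP11 p11 (by decide) (by decide) (by decide) (by decide), cntP12 p12 (by decide) (by decide) (by decide) (by decide), cntP13 p13 (by decide) (by decide) (by decide) (by decide), cntP14 p14 (by decide) (by decide) (by decide) (by decide), cntP15 p15 (by decide) (by decide) (by decide) (by decide), cntP16 p16 (by decide) (by decide) (by decide) (by decide), cntP17 p17 (by decide) (by decide) (by decide) (by decide), cntP18 heven p18 (by decide) (by decide) (by decide) (by decide), cntP19 p19 (by decide) (by decide) (by decide) (by decide), cntP20 p20 (by decide) (by decide) (by decide) (by decide), cntP21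 p21 (by decide) (by decide) (by decide) (by decide), cntP22 p22 (by decide) (by decide) (by decide) (by decide), cntP23 p23 (by decide) (by decide) (by decide) (by decide), cntP24 p24 (by decide) (by decide) (by decide) (by decide)]
  rw [smul_eq_mul]
  field_simp
  ring
end MagicGap
end
end

section
/- Fix integers n ≥ 1 and d ≥ n. Let G be the square matrix indexed by the symmetric group S_n with entries G(σ,τ) = d^{c(στ^{−1})}, where c(π) is the number of cycles of the permutation π (fixed points counted). Then G is invertible, and its inverse W = G^{−1} (the Weingarten matrix) satisfies, for every τ ∈ S_n, Σ_{σ∈S_n} W(σ,τ) = 1 / (n! · C(d+n−1, n)), where C(d+n−1,n) is the binomial coefficient. -/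
/-!
`G` is the Gram matrix `Aᴴ A` of the permutation operators `e_g ↦ e_{g ∘ σ}` on the basis tensors
`e_g`, `g : Fin n → Fin d`: both `G σ τ` and `(Aᴴ A) σ τ` count the `g` with `g ∘ σ = g ∘ τ`, i.e.
the `g` constant on the cycles of `σ τ⁻¹`. For `d ≥ n` an injective `g` tells all permutations
apart, so `A` is injective and `G` is positive definite.

Every column of `G` sums to `∑_π d^{c(π)}`. By Burnside's lemma for `S_n` acting on
`Fin n → Fin d` by precomposition this is `n!` times the number of orbits, and an orbit is
determined by the multiset of values, so there are `C(d+n-1, n)` of them. With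
`D = n! C(d+n-1, n)`, `𝟙ᵀ G = D 𝟙ᵀ` gives `𝟙ᵀ G⁻¹ = D⁻¹ 𝟙ᵀ`.
-/

open scoped BigOperators
open Matrix

noncomputable section

namespace MagicGap

/-- Total number of cycles of a permutation of `Fin n`, fixed points included. -/
def cycleCount {n : ℕ} (π : Equiv.Perm (Fin n)) : ℕ :=
  π.cycleType.card + (n - π.support.card)

open Equiv Equiv.Perm MulAction Finset

section SameCycleClasses

variable {α : Type*} [Fintype α] [DecidableEq α]

def sameCycleClass (π : Perm α) (x : α) :
    {c // c ∈ π.cycleFactorsFinset} ⊕ {x // x ∉ π.support} :=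
  if h : x ∈ π.support then .inl ⟨π.cycleOf x, cycleOf_mem_cycleFactorsFinset_iff.mpr h⟩
  else .inr ⟨x, h⟩

lemma sameCycleClass_eq_iff {π : Perm α} {x y : α} :
    sameCycleClass π x = sameCycleClass π y ↔ π.SameCycle x y := by
  by_cases hx : x ∈ π.support <;> by_cases hy : y ∈ π.support <;>
    simp only [sameCycleClass, hx, hy, dite_true, dite_false, reduceCtorEq,
      Sum.inl.injEq, Sum.inr.injEq, Subtype.mk.injEq]
  · refine ⟨fun h => ?_, SameCycle.cycleOf_eq⟩
    have hy' : y ∈ (π.cycleOf x).support := h ▸ mem_support_cycleOf_iff.mpr ⟨.refl _ _, hy⟩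
    exact (mem_support_cycleOf_iff.mp hy').1
  · exact iff_of_false id fun h => hy ((SameCycle.mem_support_iff h).mp hx)
  · exact iff_of_false id fun h => hx ((SameCycle.mem_support_iff h).mpr hy)
  · exact ⟨fun h => h ▸ SameCycle.refl _ _, fun h => h.eq_of_left (notMem_support.mp hx)⟩

lemma sameCycleClass_surjective (π : Perm α) : Function.Surjective (sameCycleClass π) := by
  rintro (⟨c, hc⟩ | ⟨x, hx⟩)
  · obtain ⟨x, hx⟩ := (mem_cycleFactorsFinset_iff.mp hc).1.nonempty_support
    have hxπ : x ∈ π.support := mem_cycleFactorsFinset_support_le hc hx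
    refine ⟨x, ?_⟩
    simp only [sameCycleClass, hxπ, dite_true, cycle_is_cycleOf hx hc]
  · exact ⟨x, by simp only [sameCycleClass, hx, dite_false]⟩

lemma card_quotient_sameCycle (π : Perm α) :
    Nat.card (Quotient (SameCycle.setoid π)) =
      π.cycleType.card + (Fintype.card α - #π.support) := by
  let e : Quotient (SameCycle.setoid π) ≃ _ := Equiv.ofBijective
    (Quotient.lift (sameCycleClass π) fun _ _ => sameCycleClass_eq_iff.mpr)
    ⟨fun p q => Quotient.inductionOn₂ p q fun _ _ h => Quotient.sound (sameCycleClass_eq_iff.mp h),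
      fun c => ⟨⟦_⟧, (sameCycleClass_surjective π c).choose_spec⟩⟩
  rw [Nat.card_congr e, Nat.card_sum, Nat.card_eq_fintype_card, Nat.card_eq_fintype_card,
    Fintype.card_coe, Fintype.card_subtype_compl, Fintype.card_coe, cycleType_def,
    Multiset.card_map]
  rfl

lemma card_partition_parts (π : Perm α) :
    π.partition.parts.card = π.cycleType.card + (Fintype.card α - #π.support) := by
  rw [parts_partition, Multiset.card_add, Multiset.card_replicate]

end SameCycleClasses

section FixedFunctions

variable {α β : Type*}

lemma apply_eq_of_sameCycle [Finite α] {π : Perm α} {g : α → β} (hg : g ∘ π = g) {x y : α}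
    (h : π.SameCycle x y) : g x = g y := by
  obtain ⟨i, -, rfl⟩ := h.exists_pow_eq'
  have hsemiconj : Function.Semiconj g π id := congrFun hg
  rw [coe_pow, (hsemiconj.iterate_right i).eq, Function.iterate_id, id]

lemma comp_inv_eq_self_iff {π : Perm α} {g : α → β} : g ∘ ⇑π⁻¹ = g ↔ g ∘ π = g := by
  constructor <;> intro h <;> funext x
  · simpa using (congrFun h (π x)).symm
  · simpa using (congrFun h (π⁻¹ x)).symm

lemma comp_mul_inv_eq_self_iff {σ τ : Perm α} {g : α → β} :
    g ∘ ⇑(σ * τ⁻¹) = g ↔ g ∘ σ = g ∘ τ := by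
  constructor <;> intro h <;> funext x
  · simpa using congrFun h (τ x)
  · simpa using congrFun h (τ⁻¹ x)

def compPermInvariantEquiv [Finite α] (π : Perm α) :
    {g : α → β // g ∘ π = g} ≃ (Quotient (SameCycle.setoid π) → β) where
  toFun g := Quotient.lift g.1 fun _ _ => apply_eq_of_sameCycle g.2
  invFun f := ⟨fun x => f ⟦x⟧,
    funext fun x => congrArg f (Quotient.sound (SameCycle.refl π x).apply_left)⟩
  left_inv _ := rfl
  right_inv _ := funext fun q => q.inductionOn fun _ => rfl

lemma card_compPermInvariant [Fintype α] [DecidableEq α] (π : Perm α) :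
    Nat.card {g : α → β // g ∘ π = g} = Nat.card β ^ π.partition.parts.card := by
  rw [Nat.card_congr (compPermInvariantEquiv π), Nat.card_fun, card_quotient_sameCycle,
    card_partition_parts]

end FixedFunctions

section Orbits

variable {α β : Type*} [Fintype α] [DecidableEq β]

def valueSym (g : α → β) : Sym β (Fintype.card α) :=
  ⟨univ.val.map g, by rw [Multiset.card_map, card_val, card_univ]⟩

lemma exists_perm_comp_eq_of_card_fiber_eq {g h : α → β}
    (hcard : ∀ b, Fintype.card {a // g a = b} = Fintype.card {a // h a = b}) :
    ∃ σ : Perm α, h ∘ σ = g :=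
  ⟨ofFiberEquiv fun b => Fintype.equivOfCardEq (hcard b), funext (ofFiberEquiv_map _)⟩

lemma valueSym_eq_iff {g h : α → β} : valueSym g = valueSym h ↔ ∃ σ : Perm α, h ∘ σ = g := by
  refine ⟨fun hgh => exists_perm_comp_eq_of_card_fiber_eq fun b => ?_, ?_⟩
  · have hcount := congrArg (Multiset.count b ∘ Subtype.val) hgh
    simp only [Function.comp_apply, valueSym, Multiset.count_map] at hcount
    simp only [Fintype.card_subtype, Finset.card_def, Finset.filter_val, @eq_comm _ b] at hcount ⊢
    exact hcount
  · rintro ⟨σ, rfl⟩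
    exact Subtype.ext <| by simp only [valueSym, ← Multiset.map_map, Multiset.map_univ_val_equiv]

lemma valueSym_surjective : Function.Surjective (valueSym (α := α) (β := β)) := by
  intro s
  let e : α ≃ s.val := Fintype.equivOfCardEq (by rw [Multiset.card_coe, s.prop])
  refine ⟨fun a => e a, Subtype.ext ?_⟩
  have hs := Multiset.map_univ_coe s.val
  rw [← Multiset.map_univ_val_equiv e, Multiset.map_map] at hs
  exact hs

-- `σ • g = g ∘ σ⁻¹`
attribute [local instance] arrowAction

lemma orbitRel_iff_valueSym_eq (g h : α → β) :
    orbitRel (Perm α) (α → β) g h ↔ valueSym g = valueSym h := by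
  rw [orbitRel_apply, mem_orbit_iff, valueSym_eq_iff, ← (Equiv.inv (Perm α)).exists_congr_right]
  rfl

lemma card_orbitRel_quotient [Fintype β] :
    Nat.card (orbitRel.Quotient (Perm α) (α → β)) =
      (Fintype.card β).multichoose (Fintype.card α) := by
  let e : orbitRel.Quotient (Perm α) (α → β) ≃ Sym β (Fintype.card α) := Equiv.ofBijective
    (Quotient.lift valueSym fun g h => (orbitRel_iff_valueSym_eq g h).mp)
    ⟨fun p q => Quotient.inductionOn₂ p q fun g h hgh =>
        Quotient.sound ((orbitRel_iff_valueSym_eq g h).mpr hgh),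
      fun s => ⟨⟦_⟧, (valueSym_surjective s).choose_spec⟩⟩
  rw [Nat.card_congr e, Sym.natCard_sym_eq_multichoose, Nat.card_eq_fintype_card]

theorem sum_pow_card_partition_parts [DecidableEq α] (d : ℕ) :
    ∑ π : Perm α, d ^ π.partition.parts.card =
      (Fintype.card α).factorial * d.multichoose (Fintype.card α) := by
  classical
  have hfixed (π : Perm α) :
      Fintype.card (fixedBy (α → Fin d) π) = d ^ π.partition.parts.card := by
    rw [← Nat.card_eq_fintype_card, Nat.card_congr (Equiv.subtypeEquivRight
      (p := (· ∈ fixedBy (α → Fin d) π)) (q := fun g => g ∘ π = g) fun _ => comp_inv_eq_self_iff),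
      card_compPermInvariant, Nat.card_fin]
  have hburnside := sum_card_fixedBy_eq_card_orbits_mul_card_group (Perm α) (α → Fin d)
  rw [← Nat.card_eq_fintype_card (α := orbitRel.Quotient _ _), card_orbitRel_quotient,
    Fintype.card_perm, Fintype.card_fin] at hburnside
  simp only [hfixed] at hburnside
  rw [hburnside, mul_comm]

end Orbits

section GramMatrix

variable (α β : Type*) [Fintype α] [DecidableEq α] [Fintype β] [DecidableEq β]

/-- Column `σ` is the matrix of the operator `e_g ↦ e_{g ∘ σ}` on `(R^β)^{⊗α}`, flattened. -/
def permOperatorEntries (R : Type*) [Zero R] [One R] : Matrix ((α → β) × (α → β)) (Perm α) R :=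
  fun p σ => if p.1 ∘ σ = p.2 then 1 else 0

variable {α β}

lemma conjTranspose_mul_permOperatorEntries_apply {R : Type*} [CommSemiring R] [StarRing R]
    (σ τ : Perm α) :
    ((permOperatorEntries α β R)ᴴ * permOperatorEntries α β R) σ τ =
      (Fintype.card β : R) ^ (σ * τ⁻¹).partition.parts.card := by
  rw [Matrix.mul_apply]
  simp only [conjTranspose_apply, permOperatorEntries, apply_ite star, star_one,
    star_zero, ite_mul, one_mul, zero_mul, Fintype.sum_prod_type, Finset.sum_ite_eq,
    Finset.mem_univ, if_true]
  rw [Finset.sum_boole, ← Fintype.card_subtype, ← Nat.card_eq_fintype_card,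
    ← Nat.card_congr (Equiv.subtypeEquivRight fun _ => comp_mul_inv_eq_self_iff.trans eq_comm),
    card_compPermInvariant, Nat.card_eq_fintype_card, Nat.cast_pow]

lemma permOperatorEntries_mulVec_injective {R : Type*} [Semiring R]
    (h : Fintype.card α ≤ Fintype.card β) :
    Function.Injective (permOperatorEntries α β R).mulVec := by
  obtain ⟨ι⟩ := Function.Embedding.nonempty_of_card_le h
  have hentry (v : Perm α → R) (τ : Perm α) :
      (permOperatorEntries α β R *ᵥ v) (ι, ι ∘ τ) = v τ := by
    simp only [mulVec, dotProduct, permOperatorEntries, ite_mul, one_mul, zero_mul,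
      ι.injective.comp_left.eq_iff, DFunLike.coe_fn_eq, Finset.sum_ite_eq', Finset.mem_univ,
      if_true]
  intro v w hvw
  funext τ
  rw [← hentry v, ← hentry w, hvw]

end GramMatrix

lemma sum_nonsing_inv_apply_of_sum_apply {ι K : Type*} [Fintype ι] [DecidableEq ι] [Field K]
    {M : Matrix ι ι K} (hM : IsUnit M) {c : K} (hc : ∀ τ, ∑ σ, M σ τ = c) (τ : ι) :
    ∑ σ, M⁻¹ σ τ = c⁻¹ := by
  have hones : (fun _ => 1) ᵥ* M = c • fun _ => (1 : K) := by
    funext τ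
    simp [vecMul, dotProduct, hc]
  have hinv : (fun _ => 1) = c • ((fun _ => 1) ᵥ* M⁻¹) := by
    rw [← smul_vecMul, ← hones, vecMul_vecMul, mul_nonsing_inv _ ((isUnit_iff_isUnit_det M).mp hM),
      vecMul_one]
  have hτ := congrFun hinv τ
  simp only [Pi.smul_apply, vecMul, dotProduct, one_mul, smul_eq_mul] at hτ
  exact (inv_eq_of_mul_eq_one_right hτ.symm).symm

lemma cycleCount_eq_card_partition_parts {n : ℕ} (π : Perm (Fin n)) :
    cycleCount π = π.partition.parts.card := by
  rw [card_partition_parts, Fintype.card_fin, cycleCount]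

theorem sum_pow_cycleCount (n d : ℕ) :
    ∑ π : Perm (Fin n), d ^ cycleCount π = n.factorial * (d + n - 1).choose n := by
  simpa only [cycleCount_eq_card_partition_parts, Fintype.card_fin, Nat.multichoose_eq]
    using sum_pow_card_partition_parts (α := Fin n) d

theorem weingarten_column_sum_general
    (n d : ℕ) (hd : n ≤ d)
    (G : Matrix (Equiv.Perm (Fin n)) (Equiv.Perm (Fin n)) ℂ)
    (hG : ∀ σ τ : Equiv.Perm (Fin n), G σ τ = (d : ℂ) ^ cycleCount (σ * τ⁻¹)) :
    IsUnit G ∧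
      ∀ τ : Equiv.Perm (Fin n),
        ∑ σ : Equiv.Perm (Fin n), G⁻¹ σ τ =
          1 / ((n.factorial : ℂ) * ((Nat.choose (d + n - 1) n : ℕ) : ℂ)) := by
  have hgram :
      G = (permOperatorEntries (Fin n) (Fin d) ℂ)ᴴ * permOperatorEntries (Fin n) (Fin d) ℂ := by
    ext σ τ
    rw [hG, conjTranspose_mul_permOperatorEntries_apply, Fintype.card_fin,
      cycleCount_eq_card_partition_parts]
  have hunit : IsUnit G := by
    open scoped ComplexOrder in
    exact hgram ▸ (PosDef.conjTranspose_mul_self _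
      (permOperatorEntries_mulVec_injective (by simpa using hd))).isUnit
  have hcolumn (τ : Perm (Fin n)) :
      ∑ σ, G σ τ = (n.factorial : ℂ) * ((Nat.choose (d + n - 1) n : ℕ) : ℂ) := by
    rw [← Equiv.sum_comp (Equiv.mulRight τ)]
    simp only [hG, coe_mulRight, mul_inv_cancel_right]
    exact_mod_cast sum_pow_cycleCount n d
  exact ⟨hunit, fun τ => by rw [sum_nonsing_inv_apply_of_sum_apply hunit hcolumn, one_div]⟩

/-- For `n ≥ 1` and `d ≥ n`, the Gram matrix
`G(σ,τ) = d^{c(στ⁻¹)}` of the permutation operators on `(ℂ^d)^{⊗n}` is invertible,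
and each column of the Weingarten matrix `W = G⁻¹` sums to
`1/(n! · C(d+n−1, n))`. -/
theorem weingarten_column_sum
    (n d : ℕ) (hn : 1 ≤ n) (hd : n ≤ d)
    (G : Matrix (Equiv.Perm (Fin n)) (Equiv.Perm (Fin n)) ℂ)
    (hG : ∀ σ τ : Equiv.Perm (Fin n), G σ τ = (d : ℂ) ^ cycleCount (σ * τ⁻¹)) :
    IsUnit G ∧
      ∀ τ : Equiv.Perm (Fin n),
        ∑ σ : Equiv.Perm (Fin n), G⁻¹ σ τ =
          1 / ((n.factorial : ℂ) * ((Nat.choose (d + n - 1) n : ℕ) : ℂ)) :=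
  weingarten_column_sum_general n d hd G hG

end MagicGap
end
end

section
/- Let ψ = |ψ⟩⟨ψ| be a pure state on (ℂ^d)^{⊗n} and suppose ψ = Σ_{i=1}^k x_i σ_i is a finite decomposition with x_i ∈ ℝ and each σ_i a stabilizer state. Then d^{−n} Σ_{a∈ℤ_d^{2n}} |Tr(D_a† ψ)| ≤ Σ_{i=1}^k |x_i|; consequently the Weyl–Heisenberg 1-norm of ψ lower-bounds its robustness of magic. -/
/-!
The displacement operators `D_a`, `a ∈ ℤ_d^{2n}`, are orthogonal for the Hilbert–Schmidt inner
product: `Tr(D_a† D_b) = dⁿ δ_{ab}`. For a stabilizer state `σ = d⁻ⁿ Σ_{a∈𝒮} ω^{f(a)} D_a` this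
gives `Tr(D_a† σ) = ω^{f(a)}` on `𝒮` and `0` off it, so the Weyl–Heisenberg 1-norm
`d⁻ⁿ Σ_a |Tr(D_a† σ)|` of `σ` is `|𝒮| / dⁿ = 1`. Since the 1-norm is a seminorm, a decomposition
`ψ = Σ xᵢ σᵢ` bounds it by `Σ |xᵢ|`.
-/

open scoped BigOperators
open Matrix

noncomputable section

namespace MagicGap

open Classical in
/-- A stabilizer state on `(ℂ^d)^{⊗n}`: a rank-one orthogonal projector of the form
`σ = d^{−n} Σ_{a∈𝒮} ω^{f(a)} D_a` for a totally isotropic subgroup `𝒮 ⊆ ℤ_d^{2n}`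
of order `d^n` and a group homomorphism `f : 𝒮 → ℤ_d`. -/
def IsStabilizerState (d n : ℕ) [NeZero d]
    (σ : Matrix (Fin n → Fin d) (Fin n → Fin d) ℂ) : Prop :=
  σ * σ = σ ∧ σᴴ = σ ∧ σ.rank = 1 ∧
  ∃ (S : AddSubgroup (PS d n)) (f : PS d n → ZMod d),
    IsIsotropic d n S ∧ Nat.card S = d ^ n ∧
    (∀ a ∈ S, ∀ b ∈ S, f (a + b) = f a + f b) ∧
    σ = ((d : ℂ) ^ n)⁻¹ •
      ∑ a : PS d n, if a ∈ S then omega d ^ (f a).val • D d n (repz a) else 0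

lemma norm_tau (d : ℕ) : ‖tau d‖ = 1 := by
  simp [tau, Complex.norm_exp]

lemma star_zpow_mul_zpow {z : ℂ} (hz : ‖z‖ = 1) (e f : ℤ) :
    star (z ^ e) * z ^ f = z ^ (f - e) := by
  have hz0 : z ≠ 0 := norm_ne_zero_iff.mp (hz ▸ one_ne_zero)
  rw [Complex.star_def, ← Complex.inv_eq_conj (by rw [norm_zpow, hz, _root_.one_zpow]),
    ← _root_.zpow_neg, ← zpow_add₀ hz0, neg_add_eq_sub]

lemma trace_conjTranspose_mul_of_apply_eq_prod {ι κ R : Type*} [Fintype ι] [DecidableEq ι]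
    [Fintype κ] [CommSemiring R] [StarRing R] {M N : Matrix (ι → κ) (ι → κ) R}
    {A B : ι → Matrix κ κ R} (hM : ∀ j k, M j k = ∏ i, A i (j i) (k i))
    (hN : ∀ j k, N j k = ∏ i, B i (j i) (k i)) :
    trace (Mᴴ * N) = ∏ i, trace ((A i)ᴴ * B i) := by
  simp only [trace, diag, mul_apply, conjTranspose_apply, hM, hN, star_prod,
    ← Finset.prod_mul_distrib, Fintype.prod_sum]

def whOneNorm (d n : ℕ) (M : Matrix (Fin n → Fin d) (Fin n → Fin d) ℂ) : ℝ :=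
  ((d : ℝ) ^ n)⁻¹ * ∑ a : Reps d n, ‖trace ((D d n (toZ a))ᴴ * M)‖

lemma whOneNorm_sum_smul_le (d n : ℕ) {ι : Type*} (s : Finset ι) (c : ι → ℂ)
    (M : ι → Matrix (Fin n → Fin d) (Fin n → Fin d) ℂ) :
    whOneNorm d n (∑ i ∈ s, c i • M i) ≤ ∑ i ∈ s, ‖c i‖ * whOneNorm d n (M i) := by
  have hterm : ∀ a : Reps d n, ‖trace ((D d n (toZ a))ᴴ * ∑ i ∈ s, c i • M i)‖ ≤
      ∑ i ∈ s, ‖c i‖ * ‖trace ((D d n (toZ a))ᴴ * M i)‖ := fun a => by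
    rw [Matrix.mul_sum, trace_sum]
    refine (norm_sum_le _ _).trans_eq (Finset.sum_congr rfl fun i _ => ?_)
    rw [Matrix.mul_smul, trace_smul, smul_eq_mul, norm_mul]
  calc whOneNorm d n (∑ i ∈ s, c i • M i)
      ≤ ((d : ℝ) ^ n)⁻¹ * ∑ a : Reps d n, ∑ i ∈ s, ‖c i‖ * ‖trace ((D d n (toZ a))ᴴ * M i)‖ :=
        mul_le_mul_of_nonneg_left (Finset.sum_le_sum fun a _ => hterm a) (by positivity)
    _ = ∑ i ∈ s, ‖c i‖ * whOneNorm d n (M i) := by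
        simp only [whOneNorm, Finset.mul_sum]
        rw [Finset.sum_comm]
        exact Finset.sum_congr rfl fun i _ => Finset.sum_congr rfl fun a _ => by ring

section

variable {d : ℕ} [NeZero d]

lemma isPrimitiveRoot_omega : IsPrimitiveRoot (omega d) d :=
  Complex.isPrimitiveRoot_exp d (NeZero.ne d)

lemma norm_omega : ‖omega d‖ = 1 :=
  isPrimitiveRoot_omega.norm'_eq_one (NeZero.ne d)

lemma sum_omega_zpow_mul (m : ℤ) :
    ∑ j : Fin d, omega d ^ (m * (j : ℕ)) = if (m : ZMod d) = 0 then (d : ℂ) else 0 := by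
  have hone : omega d ^ m = 1 ↔ (m : ZMod d) = 0 := by
    rw [isPrimitiveRoot_omega.zpow_eq_one_iff_dvd, ZMod.intCast_zmod_eq_zero_iff_dvd]
  simp only [_root_.zpow_mul, zpow_natCast]
  rw [Fin.sum_univ_eq_sum_range (fun j => (omega d ^ m) ^ j) d]
  split_ifs with hm
  · simp [hone.mpr hm]
  · rw [geom_sum_eq (hone.not.mpr hm), ← zpow_natCast, ← _root_.zpow_mul, mul_comm,
      _root_.zpow_mul, zpow_natCast, isPrimitiveRoot_omega.pow_eq_one, _root_.one_zpow,
      sub_self, zero_div]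

lemma sum_ite_natCast_eq (r : ZMod d) (c : ℂ) :
    ∑ k : Fin d, (if ((k : ℕ) : ZMod d) = r then c else 0) = c := by
  have hiff : ∀ k : Fin d, ((k : ℕ) : ZMod d) = r ↔ k = ⟨r.val, r.val_lt⟩ := fun k => by
    rw [Fin.ext_iff, ← (ZMod.val_injective d).eq_iff, ZMod.val_natCast_of_lt k.isLt]
  simp only [hiff, Finset.sum_ite_eq', Finset.mem_univ, if_true]

def rep (b : ZMod d × ZMod d) : ℤ × ℤ := ((b.1.val : ℤ), (b.2.val : ℤ))

lemma D1_rep_apply (b : ZMod d × ZMod d) (k j : Fin d) :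
    D1 d (rep b) k j = if ((k : ℕ) : ZMod d) = (j : ℕ) + b.1 then
      tau d ^ ((b.1.val : ℤ) * b.2.val) * omega d ^ ((b.2.val : ℤ) * (j : ℕ)) else 0 := by
  simp [D1, rep]

lemma sum_star_D1_rep_mul (b c : ZMod d × ZMod d) (j : Fin d) :
    ∑ k, star (D1 d (rep b) k j) * D1 d (rep c) k j =
      if b.1 = c.1 then
        star (tau d ^ ((b.1.val : ℤ) * b.2.val)) * tau d ^ ((c.1.val : ℤ) * c.2.val) *
          omega d ^ (((c.2.val : ℤ) - b.2.val) * (j : ℕ))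
      else 0 := by
  simp only [D1_rep_apply, apply_ite star, star_zero, ite_zero_mul_ite_zero]
  split_ifs with h
  · simp only [h, and_self, sum_ite_natCast_eq, star_mul', sub_mul]
    rw [← star_zpow_mul_zpow norm_omega]
    ring
  · refine Finset.sum_eq_zero fun k _ => if_neg fun hk => h ?_
    exact add_left_cancel (hk.1.symm.trans hk.2)

lemma trace_conjTranspose_D1_rep_mul_D1_rep (b c : ZMod d × ZMod d) :
    trace ((D1 d (rep b))ᴴ * D1 d (rep c)) = if b = c then (d : ℂ) else 0 := by
  simp only [trace, diag, mul_apply, conjTranspose_apply, sum_star_D1_rep_mul]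
  by_cases h1 : b.1 = c.1
  · simp only [h1, if_true, ← Finset.mul_sum, sum_omega_zpow_mul]
    push_cast
    simp only [ZMod.natCast_zmod_val, sub_eq_zero]
    by_cases h2 : c.2 = b.2
    · rw [if_pos h2, if_pos (Prod.ext h1 h2.symm), ← h1, ← h2, star_zpow_mul_zpow (norm_tau d),
        sub_self, zpow_zero, one_mul]
    · rw [if_neg h2, if_neg fun h => h2 (congrArg Prod.snd h).symm, mul_zero]
  · rw [if_neg fun h => h1 (congrArg Prod.fst h)]
    simp [h1]

lemma trace_conjTranspose_D_repz_mul_D_repz {n : ℕ} (a b : PS d n) :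
    trace ((D d n (repz a))ᴴ * D d n (repz b)) = if a = b then (d : ℂ) ^ n else 0 := by
  rw [trace_conjTranspose_mul_of_apply_eq_prod (M := D d n (repz a)) (N := D d n (repz b))
    (A := fun i => D1 d (rep (a i))) (B := fun i => D1 d (rep (b i))) (fun _ _ => rfl)
    (fun _ _ => rfl)]
  simp only [trace_conjTranspose_D1_rep_mul_D1_rep]
  split_ifs with hab
  · simp [hab]
  · obtain ⟨i, hi⟩ := Function.ne_iff.mp hab
    exact Finset.prod_eq_zero (Finset.mem_univ i) (if_neg hi)

lemma trace_conjTranspose_D_repz_mul_sum_smul {n : ℕ} (c : PS d n → ℂ) (e : PS d n) :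
    trace ((D d n (repz e))ᴴ * ∑ a, c a • D d n (repz a)) = (d : ℂ) ^ n * c e := by
  simp [Matrix.mul_sum, trace_sum, trace_conjTranspose_D_repz_mul_D_repz, mul_comm]

open Classical in
lemma trace_conjTranspose_D_repz_mul_stabilizer {n : ℕ} (S : AddSubgroup (PS d n))
    (f : PS d n → ZMod d) (e : PS d n) :
    trace ((D d n (repz e))ᴴ * (((d : ℂ) ^ n)⁻¹ •
      ∑ a : PS d n, if a ∈ S then omega d ^ (f a).val • D d n (repz a) else 0)) =
      if e ∈ S then omega d ^ (f e).val else 0 := by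
  have hform : ((d : ℂ) ^ n)⁻¹ •
      ∑ a : PS d n, (if a ∈ S then omega d ^ (f a).val • D d n (repz a) else 0) =
      ∑ a, (((d : ℂ) ^ n)⁻¹ * if a ∈ S then omega d ^ (f a).val else 0) • D d n (repz a) := by
    rw [Finset.smul_sum]
    refine Finset.sum_congr rfl fun a _ => ?_
    split_ifs <;> simp [smul_smul]
  rw [hform, trace_conjTranspose_D_repz_mul_sum_smul,
    mul_inv_cancel_left₀ (pow_ne_zero n (Nat.cast_ne_zero.mpr (NeZero.ne d)))]

variable (d) in
def finEquivZMod : Fin d ≃ ZMod d where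
  toFun k := (k : ℕ)
  invFun r := ⟨r.val, r.val_lt⟩
  left_inv k := Fin.ext (ZMod.val_natCast_of_lt k.isLt)
  right_inv := ZMod.natCast_zmod_val

variable (d) in
def repsEquivPS (n : ℕ) : Reps d n ≃ PS d n :=
  Equiv.piCongrRight fun _ => (finEquivZMod d).prodCongr (finEquivZMod d)

lemma repz_repsEquivPS {n : ℕ} (a : Reps d n) : repz (repsEquivPS d n a) = toZ a := by
  funext i
  simp [repz, toZ, repsEquivPS, finEquivZMod, ZMod.val_natCast_of_lt (a i).1.isLt,
    ZMod.val_natCast_of_lt (a i).2.isLt]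

lemma whOneNorm_eq_sum_repz {n : ℕ} (M : Matrix (Fin n → Fin d) (Fin n → Fin d) ℂ) :
    whOneNorm d n M = ((d : ℝ) ^ n)⁻¹ * ∑ e : PS d n, ‖trace ((D d n (repz e))ᴴ * M)‖ := by
  rw [whOneNorm, ← (repsEquivPS d n).sum_comp]
  simp only [repz_repsEquivPS]

lemma whOneNorm_of_isStabilizerState {n : ℕ} {σ : Matrix (Fin n → Fin d) (Fin n → Fin d) ℂ}
    (hσ : IsStabilizerState d n σ) : whOneNorm d n σ = 1 := by
  classical
  obtain ⟨-, -, -, S, f, -, hcard, -, rfl⟩ := hσ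
  rw [whOneNorm_eq_sum_repz]
  simp only [trace_conjTranspose_D_repz_mul_stabilizer, apply_ite norm, norm_pow, norm_omega,
    one_pow, norm_zero, Finset.sum_boole]
  rw [← Fintype.card_subtype, ← Nat.card_eq_fintype_card, hcard]
  push_cast
  exact inv_mul_cancel₀ (pow_ne_zero n (Nat.cast_ne_zero.mpr (NeZero.ne d)))

end

theorem WH_one_norm_le_robustness_general
    (d n : ℕ) [NeZero d]
    (ψ : Matrix (Fin n → Fin d) (Fin n → Fin d) ℂ)
    (k : ℕ) (x : Fin k → ℝ)
    (σ : Fin k → Matrix (Fin n → Fin d) (Fin n → Fin d) ℂ)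
    (hσ : ∀ i, IsStabilizerState d n (σ i))
    (hdecomp : ψ = ∑ i, (x i : ℂ) • σ i) :
    ((d : ℝ) ^ n)⁻¹ *
        ∑ a : Reps d n, ‖trace ((D d n (toZ a))ᴴ * ψ)‖
      ≤ ∑ i, |x i| := by
  calc whOneNorm d n ψ ≤ ∑ i, ‖(x i : ℂ)‖ * whOneNorm d n (σ i) :=
        hdecomp ▸ whOneNorm_sum_smul_le d n _ _ _
    _ = ∑ i, |x i| := by simp [whOneNorm_of_isStabilizerState (hσ _)]

/-- If a pure state `ψ = |ψ⟩⟨ψ|` decomposes as `ψ = Σᵢ xᵢ σᵢ` with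
real `xᵢ` and stabilizer states `σᵢ`, then
`d^{−n} Σ_a |Tr(D_a† ψ)| ≤ Σᵢ |xᵢ|`; hence the Weyl–Heisenberg 1-norm of `ψ`
lower-bounds its robustness of magic. -/
theorem WH_one_norm_le_robustness
    (d n : ℕ) [NeZero d] (hd : 2 ≤ d) (hn : 1 ≤ n)
    (ψ : Matrix (Fin n → Fin d) (Fin n → Fin d) ℂ)
    (v : (Fin n → Fin d) → ℂ) (hv : ∑ j, ‖v j‖ ^ 2 = 1)
    (hψ : ∀ j k, ψ j k = v j * star (v k))
    (k : ℕ) (x : Fin k → ℝ)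
    (σ : Fin k → Matrix (Fin n → Fin d) (Fin n → Fin d) ℂ)
    (hσ : ∀ i, IsStabilizerState d n (σ i))
    (hdecomp : ψ = ∑ i, (x i : ℂ) • σ i) :
    ((d : ℝ) ^ n)⁻¹ *
        ∑ a : Reps d n, ‖trace ((D d n (toZ a))ᴴ * ψ)‖
      ≤ ∑ i, |x i| :=
  WH_one_norm_le_robustness_general d n ψ k x σ hσ hdecomp
end MagicGap
end
end
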